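/- arXiv:1711.10931 — 6 statements merged into one kernel-verified Lean document; each statement's English description precedes it below -/
import Mathlib

section
/- Let X be a geodesic δ-hyperbolic metric space and let V ⊆ W be K-quasiconvex subsets of X. Then for every x ∈ X one has diam( p_V(x) ∪ p_V(p_W(x)) ) ≤ 12δ + 4K (second Behrstock inequality). -/
universe u v

/-- `f` parametrizes a geodesic segment from `a` to `b`, defined on `[0, dist a b]`. -/
def IsGeodesicFrom {X : Type u} [MetricSpace X] (f : ℝ → X) (a b : X) : Prop :=
  f 0 = a ∧ f (dist a b) = b ∧
    ∀ s ∈ Set.Icc (0 : ℝ) (dist a b), ∀ t ∈ Set.Icc (0 : ℝ) (dist a b),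
      dist (f s) (f t) = |s - t|

/-- The image of the geodesic segment parametrized by `f`. -/
def geodImage {X : Type u} [MetricSpace X] (f : ℝ → X) (a b : X) : Set X :=
  f '' Set.Icc (0 : ℝ) (dist a b)

/-- A geodesic metric space: any two points are joined by a geodesic segment. -/
def GeodesicSpace (X : Type u) [MetricSpace X] : Prop :=
  ∀ a b : X, ∃ f : ℝ → X, IsGeodesicFrom f a b

/-- `δ`-hyperbolicity via `δ`-slim geodesic triangles. -/
def DeltaHyperbolic (X : Type u) [MetricSpace X] (δ : ℝ) : Prop :=
  ∀ (a b c : X) (f g h : ℝ → X),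
    IsGeodesicFrom f a b → IsGeodesicFrom g b c → IsGeodesicFrom h a c →
    ∀ x ∈ geodImage h a c,
      ∃ y ∈ geodImage f a b ∪ geodImage g b c, dist x y ≤ δ

/-- `Y` is `K`-quasiconvex: every geodesic segment with both endpoints in `Y`
is contained in the closed `K`-neighborhood of `Y`. -/
def QuasiconvexSet {X : Type u} [MetricSpace X] (K : ℝ) (Y : Set X) : Prop :=
  ∀ a ∈ Y, ∀ b ∈ Y, ∀ f : ℝ → X, IsGeodesicFrom f a b →
    ∀ x ∈ geodImage f a b, Metric.infDist x Y ≤ K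

/-- Closest-point projection set of the point `x` to `Y`. -/
def projSet {X : Type u} [MetricSpace X] (Y : Set X) (x : X) : Set X :=
  {y ∈ Y | dist x y = Metric.infDist x Y}

/-- Closest-point projection of the set `S` to `Y`. -/
def projSetOf {X : Type u} [MetricSpace X] (Y S : Set X) : Set X :=
  ⋃ s ∈ S, projSet Y s

/-- The (infimal) distance between two subsets of a metric space. -/
noncomputable def setDist {X : Type u} [MetricSpace X] (S T : Set X) : ℝ :=
  sInf {d : ℝ | ∃ s ∈ S, ∃ t ∈ T, d = dist s t}

/-- The Hausdorff distance between `S` and `T` is at most `d`. -/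
def HausBound {X : Type u} [MetricSpace X] (d : ℝ) (S T : Set X) : Prop :=
  (∀ s ∈ S, Metric.infDist s T ≤ d) ∧ (∀ t ∈ T, Metric.infDist t S ≤ d)

section Aux

variable {X : Type u} [MetricSpace X]

lemma IsGeodesicFrom.dist_from {f : ℝ → X} {a b : X} (hf : IsGeodesicFrom f a b)
    {s : ℝ} (hs : s ∈ Set.Icc (0:ℝ) (dist a b)) : dist a (f s) = s := by
  have h := hf.2.2 0 ⟨le_refl 0, dist_nonneg⟩ s hs
  rw [hf.1] at h
  rw [h, zero_sub, abs_neg, abs_of_nonneg hs.1]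

lemma IsGeodesicFrom.dist_to {f : ℝ → X} {a b : X} (hf : IsGeodesicFrom f a b)
    {s : ℝ} (hs : s ∈ Set.Icc (0:ℝ) (dist a b)) : dist (f s) b = dist a b - s := by
  have h := hf.2.2 s hs (dist a b) ⟨dist_nonneg, le_refl _⟩
  rw [hf.2.1] at h
  rw [h, abs_of_nonpos (sub_nonpos.2 hs.2), neg_sub]

lemma IsGeodesicFrom.continuousOn {f : ℝ → X} {a b : X} (hf : IsGeodesicFrom f a b) :
    ContinuousOn f (Set.Icc (0:ℝ) (dist a b)) := by
  have h : LipschitzOnWith 1 f (Set.Icc (0:ℝ) (dist a b)) := by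
    rw [lipschitzOnWith_iff_dist_le_mul]
    intro s hs t ht
    rw [hf.2.2 s hs t ht, Real.dist_eq]
    simp
  exact h.continuousOn

/-- Core transition-point lemma. -/
lemma core_lemma {δ K : ℝ} (hδ : 0 < δ)
    (hgeo : GeodesicSpace X) (hhyp : DeltaHyperbolic X δ)
    {Y : Set X} (hY : QuasiconvexSet K Y) {b y0 w : X}
    (hy0 : y0 ∈ projSet Y b) (hw : w ∈ Y) {ε : ℝ} (hε : 0 < ε) :
    ∃ z : X, dist b z + dist z w = dist b w ∧
      dist b y0 - (K + δ + 2*ε) ≤ dist b z ∧ dist y0 z ≤ K + 3*δ + 4*ε := by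
  obtain ⟨f, hf⟩ := hgeo b y0
  obtain ⟨g, hg⟩ := hgeo y0 w
  obtain ⟨h, hh⟩ := hgeo b w
  set F := geodImage f b y0 with hF
  set G := geodImage g y0 w with hG
  have hbF : b ∈ F := ⟨0, ⟨le_refl 0, dist_nonneg⟩, hf.1⟩
  have hwG : w ∈ G := ⟨dist y0 w, ⟨dist_nonneg, le_refl _⟩, hg.2.1⟩
  have hFne : F.Nonempty := ⟨b, hbF⟩
  have hGne : G.Nonempty := ⟨w, hwG⟩
  set φ : ℝ → ℝ := fun t => Metric.infDist (h t) F - Metric.infDist (h t) G with hφ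
  have hφc : ContinuousOn φ (Set.Icc (0:ℝ) (dist b w)) := by
    apply ContinuousOn.sub
    · exact (Metric.continuous_infDist_pt F).comp_continuousOn hh.continuousOn
    · exact (Metric.continuous_infDist_pt G).comp_continuousOn hh.continuousOn
  have h0 : φ 0 ≤ 0 := by
    simp only [hφ, hh.1, Metric.infDist_zero_of_mem hbF]
    simpa using Metric.infDist_nonneg
  have h1 : 0 ≤ φ (dist b w) := by
    simp only [hφ, hh.2.1, Metric.infDist_zero_of_mem hwG]
    simpa using Metric.infDist_nonneg
  obtain ⟨t, ht, hφt⟩ := intermediate_value_Icc dist_nonneg hφc ⟨h0, h1⟩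
  set z := h t with hz
  have hzmem : z ∈ geodImage h b w := ⟨t, ht, rfl⟩
  obtain ⟨y, hy, hdy⟩ := hhyp b y0 w f g h hf hg hh z hzmem
  have heq : Metric.infDist z F = Metric.infDist z G := sub_eq_zero.mp hφt
  have hzF : Metric.infDist z F ≤ δ := by
    rcases hy with hy | hy
    · exact le_trans (Metric.infDist_le_dist_of_mem hy) hdy
    · rw [heq]; exact le_trans (Metric.infDist_le_dist_of_mem hy) hdy
  have hzG : Metric.infDist z G ≤ δ := heq ▸ hzF
  obtain ⟨u, huF, hdu⟩ := (Metric.infDist_lt_iff hFne).mp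
    (lt_of_le_of_lt hzF (by linarith : δ < δ + ε))
  obtain ⟨v, hvG, hdv⟩ := (Metric.infDist_lt_iff hGne).mp
    (lt_of_le_of_lt hzG (by linarith : δ < δ + ε))
  -- quasiconvexity: v is within K of Y
  have hvK : Metric.infDist v Y ≤ K := hY y0 hy0.1 w hw g hg v hvG
  obtain ⟨w0, hw0, hdw0⟩ := (Metric.infDist_lt_iff ⟨y0, hy0.1⟩).mp
    (lt_of_le_of_lt hvK (by linarith : K < K + ε))
  have hm : dist b y0 = Metric.infDist b Y := hy0.2
  have hbw0 : dist b y0 ≤ dist b w0 := by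
    rw [hm]; exact Metric.infDist_le_dist_of_mem hw0
  -- distances along geodesics
  have hbz : dist b z = t := by
    have := hh.dist_from ht; rw [← hz] at this; exact this
  have hzw : dist z w = dist b w - t := by
    have := hh.dist_to ht; rw [← hz] at this; exact this
  obtain ⟨s, hs, rfl⟩ := huF
  have hbu : dist b (f s) = s := hf.dist_from hs
  have huy0 : dist (f s) y0 = dist b y0 - s := hf.dist_to hs
  -- lower bound on dist b z
  have tri1 : dist b w0 ≤ dist b z + dist z w0 := dist_triangle b z w0
  have tri2 : dist z w0 ≤ dist z v + dist v w0 := dist_triangle z v w0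
  have hlb : dist b y0 - (K + δ + 2*ε) ≤ dist b z := by linarith
  refine ⟨z, by rw [hbz, hzw]; ring, hlb, ?_⟩
  -- upper bound on dist y0 z
  have tri3 : dist b z ≤ dist b (f s) + dist (f s) z := dist_triangle b (f s) z
  have tri4 : dist y0 z ≤ dist y0 (f s) + dist (f s) z := dist_triangle y0 (f s) z
  have hc1 : dist (f s) z = dist z (f s) := dist_comm _ _
  have hc2 : dist y0 (f s) = dist (f s) y0 := dist_comm _ _
  linarith

/-- ML: the projection point is close to extremal position. -/
lemma proj_dist_le {δ K : ℝ} (hδ : 0 < δ)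
    (hgeo : GeodesicSpace X) (hhyp : DeltaHyperbolic X δ)
    {Y : Set X} (hY : QuasiconvexSet K Y) {b y0 p : X}
    (hy0 : y0 ∈ projSet Y b) (hp : p ∈ Y) :
    dist y0 p ≤ dist b p - dist b y0 + (2*K + 4*δ) := by
  apply le_of_forall_pos_le_add
  intro ε hε
  obtain ⟨z, hsum, hlb, hub⟩ := core_lemma hδ hgeo hhyp hY hy0 hp (ε := ε/6) (by linarith)
  have tri : dist y0 p ≤ dist y0 z + dist z p := dist_triangle y0 z p
  linarith

/-- G: reverse triangle inequality through the projection point. -/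
lemma proj_reverse_tri {δ K : ℝ} (hδ : 0 < δ)
    (hgeo : GeodesicSpace X) (hhyp : DeltaHyperbolic X δ)
    {Y : Set X} (hY : QuasiconvexSet K Y) {b y0 w : X}
    (hy0 : y0 ∈ projSet Y b) (hw : w ∈ Y) :
    dist b y0 + dist y0 w ≤ dist b w + (2*K + 4*δ) := by
  apply le_of_forall_pos_le_add
  intro ε hε
  obtain ⟨z, hsum, hlb, hub⟩ := core_lemma hδ hgeo hhyp hY hy0 hw (ε := ε/6) (by linarith)
  have tri : dist y0 w ≤ dist y0 z + dist z w := dist_triangle y0 z w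
  linarith

end Aux

/-- second Behrstock inequality, Proposition 2.11. -/
theorem second_behrstock_inequality {X : Type u} [MetricSpace X] (δ K : ℝ)
    (hδ : 0 < δ) (hK : 0 ≤ K) (hgeo : GeodesicSpace X) (hhyp : DeltaHyperbolic X δ)
    (V W : Set X) (hVW : V ⊆ W)
    (hV : QuasiconvexSet K V) (hW : QuasiconvexSet K W) (x : X) :
    ∀ p ∈ projSet V x ∪ projSetOf V (projSet W x),
      ∀ q ∈ projSet V x ∪ projSetOf V (projSet W x),
        dist p q ≤ 12 * δ + 4 * K := by
  -- mixed case helper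
  have mixed : ∀ p q y : X, p ∈ projSet V x → y ∈ projSet W x → q ∈ projSet V y →
      dist p q ≤ 12 * δ + 4 * K := by
    intro p q y hp hy hq
    have hml : dist p q ≤ dist x q - dist x p + (2*K + 4*δ) :=
      proj_dist_le hδ hgeo hhyp hV hp hq.1
    have hub : ∀ v ∈ V, dist x q - (2*K + 4*δ) ≤ dist x v := by
      intro v hv
      have h1 : dist y q ≤ dist y v := by
        rw [hq.2]; exact Metric.infDist_le_dist_of_mem hv
      have h2 : dist x y + dist y v ≤ dist x v + (2*K + 4*δ) :=
        proj_reverse_tri hδ hgeo hhyp hW hy (hVW hv)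
      have h3 : dist x q ≤ dist x y + dist y q := dist_triangle x y q
      linarith
    have h4 : dist x q - (2*K + 4*δ) ≤ Metric.infDist x V := by
      by_contra hcon
      push_neg at hcon
      obtain ⟨v, hv, hdv⟩ := (Metric.infDist_lt_iff ⟨p, hp.1⟩).mp hcon
      exact absurd (hub v hv) (by linarith)
    have h5 : dist x p = Metric.infDist x V := hp.2
    linarith
  -- double projection case helper
  have double : ∀ p q y1 y2 : X, y1 ∈ projSet W x → y2 ∈ projSet W x →
      p ∈ projSet V y1 → q ∈ projSet V y2 → dist p q ≤ 12 * δ + 4 * K := by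
    intro p q y1 y2 hy1 hy2 hp hq
    have hd12 : dist y1 y2 ≤ 2*K + 4*δ := by
      have := proj_dist_le hδ hgeo hhyp hW hy1 hy2.1
      have e1 : dist x y1 = Metric.infDist x W := hy1.2
      have e2 : dist x y2 = Metric.infDist x W := hy2.2
      linarith
    rcases le_total (dist y1 p) (dist y2 q) with hle | hle
    · -- use ML at base y2 : dist q p ≤ dist y2 p - dist y2 q + c
      have hml : dist q p ≤ dist y2 p - dist y2 q + (2*K + 4*δ) :=
        proj_dist_le hδ hgeo hhyp hV hq hp.1
      have tri : dist y2 p ≤ dist y2 y1 + dist y1 p := dist_triangle y2 y1 p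
      have hc : dist y2 y1 = dist y1 y2 := dist_comm _ _
      have hc2 : dist p q = dist q p := dist_comm _ _
      linarith
    · have hml : dist p q ≤ dist y1 q - dist y1 p + (2*K + 4*δ) :=
        proj_dist_le hδ hgeo hhyp hV hp hq.1
      have tri : dist y1 q ≤ dist y1 y2 + dist y2 q := dist_triangle y1 y2 q
      linarith
  intro p hp q hq
  rcases hp with hp | hp <;> rcases hq with hq | hq
  · -- both direct projections
    have hml : dist p q ≤ dist x q - dist x p + (2*K + 4*δ) :=
      proj_dist_le hδ hgeo hhyp hV hp hq.1
    have e1 : dist x p = Metric.infDist x V := hp.2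
    have e2 : dist x q = Metric.infDist x V := hq.2
    linarith
  · obtain ⟨y, hy, hqy⟩ := Set.mem_iUnion₂.mp hq
    exact mixed p q y hp hy hqy
  · obtain ⟨y, hy, hpy⟩ := Set.mem_iUnion₂.mp hp
    have := mixed q p y hq hy hpy
    rw [dist_comm]; exact this
  · obtain ⟨y1, hy1, hpy⟩ := Set.mem_iUnion₂.mp hp
    obtain ⟨y2, hy2, hqy⟩ := Set.mem_iUnion₂.mp hq
    exact double p q y1 y2 hy1 hy2 hpy hqy
end

section
/- Let Γ be a connected graph and let Γ̂ be the cone-off of Γ with respect to a family 𝓗 of connected subgraphs. Then for each θ > 0 there exists T = T(θ) (one may take T = 2θ²) such that: if x, y are vertices with d_Γ(x,y) ≥ T, then for every path γ of Γ̂ connecting x and y, either the Γ̂-length of γ is at least θ, or every de-electrification γ̃ of γ has an 𝓗-piece of Γ-length at least θ. In particular T depends only on θ, not on Γ, 𝓗, x or y. -/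
/-! If `γ` has fewer than `θ` edges and every `𝓗`-piece is shorter than `θ`, then each edge
of `γ` is replaced by a `G`-path of length at most `max θ 1`, so the de-electrification, and
hence `d_G(x, y)`, has length below `θ · max θ 1`. -/

universe u

open SimpleGraph

/-- The cone-off of a graph `G` with respect to a family `𝓗` of (vertex sets of)
subgraphs: an edge is added between each pair of distinct vertices of each `S ∈ 𝓗`. -/
def coneOff {V : Type u} (G : SimpleGraph V) (𝓗 : Set (Set V)) : SimpleGraph V where
  Adj a b := G.Adj a b ∨ (a ≠ b ∧ ∃ S ∈ 𝓗, a ∈ S ∧ b ∈ S)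
  symm := by
    constructor
    intro a b hab
    rcases hab with h | ⟨hne, S, hS, ha, hb⟩
    · exact Or.inl h.symm
    · exact Or.inr ⟨hne.symm, S, hS, hb, ha⟩
  loopless := by
    constructor
    intro a ha
    rcases ha with h | ⟨hne, -⟩
    · exact G.irrefl h
    · exact hne rfl

/-- `δ`-hyperbolicity of a graph via `δ`-slim geodesic triangles
(geodesics being shortest-path walks). -/
def GraphHyperbolic {V : Type u} (G : SimpleGraph V) (δ : ℝ) : Prop :=
  ∀ (x y z : V) (p : G.Walk x y) (q : G.Walk y z) (r : G.Walk x z),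
    p.length = G.dist x y → q.length = G.dist y z → r.length = G.dist x z →
    ∀ v ∈ r.support, ∃ w, (w ∈ p.support ∨ w ∈ q.support) ∧ (G.dist v w : ℝ) ≤ δ

/-- A de-electrification datum: `g` is a `G`-walk obtained from the walk `γ` of the
cone-off by replacing each `𝓗`-component (the edges indexed by `C`) by a `G`-geodesic
between its endpoints; `φ` maps positions along `γ` to positions along `g`. -/
def IsDeelectrification {V : Type u} (G : SimpleGraph V) (𝓗 : Set (Set V)) {x y : V}
    (γ : (coneOff G 𝓗).Walk x y) (g : G.Walk x y) (φ : ℕ → ℕ) (C : Set ℕ) : Prop :=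
  φ 0 = 0 ∧ φ γ.length = g.length ∧
    (∀ i ≤ γ.length, g.getVert (φ i) = γ.getVert i) ∧
    (∀ i < γ.length, i ∈ C →
      (∃ S ∈ 𝓗, γ.getVert i ∈ S ∧ γ.getVert (i + 1) ∈ S) ∧
      φ (i + 1) = φ i + G.dist (γ.getVert i) (γ.getVert (i + 1))) ∧
    (∀ i < γ.length, i ∉ C →
      G.Adj (γ.getVert i) (γ.getVert (i + 1)) ∧ φ (i + 1) = φ i + 1)

lemma le_mul_of_forall_succ_le_add {f : ℕ → ℝ} {M : ℝ} {n : ℕ} (h0 : f 0 = 0)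
    (hstep : ∀ k < n, f (k + 1) ≤ f k + M) : ∀ k ≤ n, f k ≤ k * M := by
  intro k hk
  induction k with
  | zero => simp [h0]
  | succ k ih =>
    push_cast
    linarith [hstep k hk, ih (Nat.le_of_succ_le hk)]

namespace IsDeelectrification

variable {V : Type u} {G : SimpleGraph V} {𝓗 : Set (Set V)} {x y : V}
  {γ : (coneOff G 𝓗).Walk x y} {g : G.Walk x y} {φ : ℕ → ℕ} {C : Set ℕ}

lemma apply_succ_le_add (hde : IsDeelectrification G 𝓗 γ g φ C) {M : ℝ} (hM : 1 ≤ M)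
    (hpieces : ∀ i < γ.length, i ∈ C → (G.dist (γ.getVert i) (γ.getVert (i + 1)) : ℝ) ≤ M)
    {i : ℕ} (hi : i < γ.length) : (φ (i + 1) : ℝ) ≤ φ i + M := by
  obtain ⟨-, -, -, hC, hnC⟩ := hde
  by_cases hiC : i ∈ C
  · rw [(hC i hi hiC).2]
    push_cast
    linarith [hpieces i hi hiC]
  · rw [(hnC i hi hiC).2]
    push_cast
    linarith

lemma length_le_mul (hde : IsDeelectrification G 𝓗 γ g φ C) {M : ℝ} (hM : 1 ≤ M)
    (hpieces : ∀ i < γ.length, i ∈ C → (G.dist (γ.getVert i) (γ.getVert (i + 1)) : ℝ) ≤ M) :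
    (g.length : ℝ) ≤ γ.length * M := by
  rw [← hde.2.1]
  exact le_mul_of_forall_succ_le_add (f := fun i ↦ (φ i : ℝ)) (by simp [hde.1])
    (fun _ hk ↦ hde.apply_succ_le_add hM hpieces hk) _ le_rfl

end IsDeelectrification

/-- Lemma 2.18, pigeonhole for cone-offs: `T` depends only on `θ`. -/
theorem pigeonhole_for_cone_offs : ∀ θ : ℝ, 0 < θ → ∃ T : ℝ,
    ∀ (V : Type u) (G : SimpleGraph V) (𝓗 : Set (Set V)),
      G.Connected → (∀ S ∈ 𝓗, (G.induce S).Connected) →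
      ∀ x y : V, T ≤ (G.dist x y : ℝ) →
        ∀ (γ : (coneOff G 𝓗).Walk x y) (g : G.Walk x y) (φ : ℕ → ℕ) (C : Set ℕ),
          IsDeelectrification G 𝓗 γ g φ C →
          θ ≤ (γ.length : ℝ) ∨
            ∃ i < γ.length, i ∈ C ∧
              θ ≤ (G.dist (γ.getVert i) (γ.getVert (i + 1)) : ℝ) := by
  intro θ _
  set M := max θ 1
  refine ⟨θ * M, fun V G 𝓗 _ _ x y hT γ g φ C hde ↦ ?_⟩
  by_contra! h
  obtain ⟨hshort, hpieces⟩ := h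
  have hM : 0 < M := lt_of_lt_of_le one_pos (le_max_right θ 1)
  have hg := hde.length_le_mul (le_max_right θ 1)
    fun i hi hiC ↦ (hpieces i hi hiC).le.trans (le_max_left θ 1)
  have hdist : (G.dist x y : ℝ) ≤ g.length := by exact_mod_cast G.dist_le g
  have : (γ.length : ℝ) * M < θ * M := mul_lt_mul_of_pos_right hshort hM
  linarith
end

section
/- Let X be a geodesic δ-hyperbolic metric space, let η be a geodesic segment of X, and let σ be a concatenation of n geodesic segments. If σ does not intersect the (n+1)δ-neighborhood of η, then diam( p_η(σ) ) < 8δ. -/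
universe u v

/-- Subsegment of a geodesic between parameters `s` and `t` (in either order). -/
lemma geod_subseg {X : Type u} [MetricSpace X] {f : ℝ → X} {a b : X}
    (hf : IsGeodesicFrom f a b) {s t : ℝ}
    (hs : s ∈ Set.Icc (0 : ℝ) (dist a b)) (ht : t ∈ Set.Icc (0 : ℝ) (dist a b)) :
    ∃ e : ℝ → X, IsGeodesicFrom e (f s) (f t) ∧
      geodImage e (f s) (f t) ⊆ geodImage f a b := by
  obtain ⟨h0, hD, hiso⟩ := hf
  have hd : dist (f s) (f t) = |s - t| := hiso s hs t ht
  rcases le_total s t with hst | hst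
  · have hd' : dist (f s) (f t) = t - s := by rw [hd, abs_of_nonpos (by linarith)]; ring
    refine ⟨fun r => f (s + r), ⟨by simp, ?_, ?_⟩, ?_⟩
    · rw [hd']; norm_num
    · intro r1 hr1 r2 hr2
      rw [hd'] at hr1 hr2
      have m1 : s + r1 ∈ Set.Icc (0 : ℝ) (dist a b) :=
        ⟨by linarith [hs.1, hr1.1], by linarith [ht.2, hr1.2]⟩
      have m2 : s + r2 ∈ Set.Icc (0 : ℝ) (dist a b) :=
        ⟨by linarith [hs.1, hr2.1], by linarith [ht.2, hr2.2]⟩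
      rw [hiso _ m1 _ m2]
      congr 1; ring
    · rintro x ⟨r, hr, rfl⟩
      rw [hd'] at hr
      exact ⟨s + r, ⟨by linarith [hs.1, hr.1], by linarith [ht.2, hr.2]⟩, rfl⟩
  · have hd' : dist (f s) (f t) = s - t := by rw [hd, abs_of_nonneg (by linarith)]
    refine ⟨fun r => f (s - r), ⟨by simp, ?_, ?_⟩, ?_⟩
    · rw [hd']; norm_num
    · intro r1 hr1 r2 hr2
      rw [hd'] at hr1 hr2
      have m1 : s - r1 ∈ Set.Icc (0 : ℝ) (dist a b) :=
        ⟨by linarith [ht.1, hr1.2], by linarith [hs.2, hr1.1]⟩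
      have m2 : s - r2 ∈ Set.Icc (0 : ℝ) (dist a b) :=
        ⟨by linarith [ht.1, hr2.2], by linarith [hs.2, hr2.1]⟩
      rw [hiso _ m1 _ m2, abs_sub_comm]
      congr 1; ring
    · rintro x ⟨r, hr, rfl⟩
      rw [hd'] at hr
      exact ⟨s - r, ⟨by linarith [ht.1, hr.2], by linarith [hs.2, hr.1]⟩, rfl⟩

/-- Reversal of a geodesic. -/
lemma geod_rev {X : Type u} [MetricSpace X] {f : ℝ → X} {a b : X}
    (hf : IsGeodesicFrom f a b) :
    ∃ e : ℝ → X, IsGeodesicFrom e b a ∧ geodImage e b a ⊆ geodImage f a b := by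
  obtain ⟨e, he, hsub⟩ := geod_subseg hf (s := dist a b) (t := 0)
    ⟨dist_nonneg, le_rfl⟩ ⟨le_rfl, dist_nonneg⟩
  rw [hf.2.1, hf.1] at he hsub
  exact ⟨e, he, hsub⟩

/-- Key quadrilateral estimate: if a geodesic `γ` from `p` to `q` stays more than
`2δ` away from the geodesic `η`, then the projections of `p` and `q` to `η` are
at distance at most `6δ`. -/
lemma quad_proj {X : Type u} [MetricSpace X] {δ : ℝ} (hδ : 0 < δ)
    (hgeo : GeodesicSpace X) (hhyp : DeltaHyperbolic X δ)
    {u v : X} {h : ℝ → X} (hh : IsGeodesicFrom h u v)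
    {p q : X} {γ : ℝ → X} (hγ : IsGeodesicFrom γ p q)
    (hfarγ : ∀ x ∈ geodImage γ p q, 2 * δ < Metric.infDist x (geodImage h u v))
    {p' q' : X} (hp' : p' ∈ projSet (geodImage h u v) p)
    (hq' : q' ∈ projSet (geodImage h u v) q) :
    dist p' q' ≤ 6 * δ := by
  by_contra hcon
  push_neg at hcon
  obtain ⟨hp'η, hpd⟩ := hp'
  obtain ⟨hq'η, hqd⟩ := hq'
  -- geodesic from q' to p' inside η
  obtain ⟨s1, hs1, hfs1⟩ := hp'η
  obtain ⟨s2, hs2, hfs2⟩ := hq'η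
  obtain ⟨e, he, hesub⟩ := geod_subseg hh hs2 hs1
  rw [hfs1, hfs2] at he hesub
  set d : ℝ := dist p' q' with hd
  have hdq : dist q' p' = d := dist_comm q' p'
  set t : ℝ := (d - 2 * δ) / 2 with hdef_t
  have ht1 : 2 * δ < t := by rw [hdef_t]; linarith
  have ht2 : 4 * δ < d - t := by rw [hdef_t]; linarith
  have htIcc : d - t ∈ Set.Icc (0 : ℝ) (dist q' p') := by
    rw [hdq]; constructor <;> [linarith; linarith]
  set z : X := e (d - t) with hz
  have hzmem : z ∈ geodImage e q' p' := ⟨d - t, htIcc, rfl⟩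
  have hzη : z ∈ geodImage h u v := hesub hzmem
  have hz_q' : dist z q' = d - t := by
    have h0 : (0 : ℝ) ∈ Set.Icc (0 : ℝ) (dist q' p') := ⟨le_rfl, dist_nonneg⟩
    have := he.2.2 (d - t) htIcc 0 h0
    rw [he.1] at this
    rw [hz, this, sub_zero, abs_of_nonneg (by linarith)]
  have hz_p' : dist z p' = t := by
    have hD : dist q' p' ∈ Set.Icc (0 : ℝ) (dist q' p') := ⟨dist_nonneg, le_rfl⟩
    have := he.2.2 (d - t) htIcc (dist q' p') hD
    rw [he.2.1, hdq] at this
    rw [hz, this]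
    rw [show d - t - d = -t by ring, abs_neg, abs_of_nonneg (by linarith)]
  -- geodesic p → q' and its reversal
  obtain ⟨d1, hd1⟩ := hgeo p q'
  obtain ⟨frev, hfrev, hfrevsub⟩ := geod_rev hd1
  obtain ⟨g1, hg1⟩ := hgeo p p'
  -- Triangle (q', p, p')
  obtain ⟨y, hy, hyz⟩ := hhyp q' p p' frev g1 e hfrev hg1 he z hzmem
  rcases hy with hy | hy
  · -- y on [q', p]; go to second triangle (p, q, q')
    have hyd1 : y ∈ geodImage d1 p q' := hfrevsub hy
    obtain ⟨g2, hg2⟩ := hgeo q q'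
    obtain ⟨y2, hy2, hy2y⟩ := hhyp p q q' γ g2 d1 hγ hg2 hd1 y hyd1
    rcases hy2 with hy2 | hy2
    · -- y2 on γ: contradiction with farness
      have h1 := hfarγ y2 hy2
      have h2 : Metric.infDist y2 (geodImage h u v) ≤ dist y2 z :=
        Metric.infDist_le_dist_of_mem hzη
      have h3 : dist y2 z ≤ dist y2 y + dist y z := dist_triangle _ _ _
      have h4 : dist y2 y = dist y y2 := dist_comm _ _
      have h5 : dist y z = dist z y := dist_comm _ _
      linarith
    · -- y2 on [q, q']
      obtain ⟨r, hr, rfl⟩ := hy2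
      have hq_y2 : dist q (g2 r) = r := by
        have h0 : (0 : ℝ) ∈ Set.Icc (0 : ℝ) (dist q q') := ⟨le_rfl, dist_nonneg⟩
        have := hg2.2.2 0 h0 r hr
        rw [hg2.1] at this
        rw [this, zero_sub, abs_neg, abs_of_nonneg hr.1]
      have hy2_q' : dist (g2 r) q' = dist q q' - r := by
        have hD : dist q q' ∈ Set.Icc (0 : ℝ) (dist q q') := ⟨dist_nonneg, le_rfl⟩
        have := hg2.2.2 r hr (dist q q') hD
        rw [hg2.2.1] at this
        rw [this, abs_of_nonpos (by linarith [hr.2])]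
        ring
      have hqz : dist q q' ≤ dist q z := hqd ▸ Metric.infDist_le_dist_of_mem hzη
      have t1 : dist q z ≤ dist q (g2 r) + dist (g2 r) z := dist_triangle _ _ _
      have t2 : dist (g2 r) z ≤ dist (g2 r) y + dist y z := dist_triangle _ _ _
      have t3 : dist z q' ≤ dist z (g2 r) + dist (g2 r) q' := dist_triangle _ _ _
      have c1 : dist (g2 r) y = dist y (g2 r) := dist_comm _ _
      have c2 : dist y z = dist z y := dist_comm _ _
      have c3 : dist z (g2 r) = dist (g2 r) z := dist_comm _ _
      -- dist (g2 r) q' ≤ dist (g2 r) z ≤ 2δ, so dist z q' ≤ 4δ < d - t : contra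
      linarith [hz_q']
  · -- y on [p, p']
    obtain ⟨r, hr, rfl⟩ := hy
    have hp_y : dist p (g1 r) = r := by
      have h0 : (0 : ℝ) ∈ Set.Icc (0 : ℝ) (dist p p') := ⟨le_rfl, dist_nonneg⟩
      have := hg1.2.2 0 h0 r hr
      rw [hg1.1] at this
      rw [this, zero_sub, abs_neg, abs_of_nonneg hr.1]
    have hy_p' : dist (g1 r) p' = dist p p' - r := by
      have hD : dist p p' ∈ Set.Icc (0 : ℝ) (dist p p') := ⟨dist_nonneg, le_rfl⟩
      have := hg1.2.2 r hr (dist p p') hD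
      rw [hg1.2.1] at this
      rw [this, abs_of_nonpos (by linarith [hr.2])]
      ring
    have hpz : dist p p' ≤ dist p z := hpd ▸ Metric.infDist_le_dist_of_mem hzη
    have t1 : dist p z ≤ dist p (g1 r) + dist (g1 r) z := dist_triangle _ _ _
    have t3 : dist z p' ≤ dist z (g1 r) + dist (g1 r) p' := dist_triangle _ _ _
    have c2 : dist (g1 r) z = dist z (g1 r) := dist_comm _ _
    have c3 : dist z (g1 r) = dist (g1 r) z := dist_comm _ _
    have c4 : dist z (g1 r) ≤ δ := by
      have : dist z (g1 r) = dist z (g1 r) := rfl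
      calc dist z (g1 r) = dist z (g1 r) := rfl
        _ ≤ δ := by rw [← dist_comm (g1 r) z] at *; exact (dist_comm z (g1 r)) ▸ hyz
    -- dist (g1 r) p' ≤ dist (g1 r) z ≤ δ ⇒ dist z p' ≤ 2δ < t : contra
    linarith [hz_p']

/-- Chain lemma: a geodesic between a point on piece `i` and a point on piece
`j = i + m` of the concatenation stays within `m * δ` of the concatenation. -/
lemma chain_near {X : Type u} [MetricSpace X] {δ : ℝ} (hδ : 0 < δ)
    (hgeo : GeodesicSpace X) (hhyp : DeltaHyperbolic X δ)
    {n : ℕ} (xs : Fin (n + 1) → X) (fs : Fin n → ℝ → X)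
    (hfs : ∀ i : Fin n, IsGeodesicFrom (fs i) (xs i.castSucc) (xs i.succ))
    (σ : Set X) (hσ : σ = ⋃ i : Fin n, geodImage (fs i) (xs i.castSucc) (xs i.succ)) :
    ∀ (m : ℕ) (i j : Fin n), (j : ℕ) = (i : ℕ) + m →
    ∀ sp ∈ Set.Icc (0 : ℝ) (dist (xs i.castSucc) (xs i.succ)),
    ∀ sq ∈ Set.Icc (0 : ℝ) (dist (xs j.castSucc) (xs j.succ)),
    ∃ γ : ℝ → X, IsGeodesicFrom γ (fs i sp) (fs j sq) ∧
      ∀ x ∈ geodImage γ (fs i sp) (fs j sq), ∃ s ∈ σ, dist x s ≤ (m : ℝ) * δ := by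
  intro m
  induction m with
  | zero =>
    intro i j hij sp hsp sq hsq
    have hij' : i = j := Fin.ext (by omega)
    subst hij'
    obtain ⟨e, he, hsub⟩ := geod_subseg (hfs i) hsp hsq
    refine ⟨e, he, ?_⟩
    intro x hx
    refine ⟨x, ?_, by simp⟩
    rw [hσ]
    exact Set.mem_iUnion.2 ⟨i, hsub hx⟩
  | succ m IH =>
    intro i j hij sp hsp sq hsq
    have hj1 : 1 ≤ (j : ℕ) := by omega
    have hj'lt : (j : ℕ) - 1 < n := by omega
    set j' : Fin n := ⟨(j : ℕ) - 1, hj'lt⟩ with hj'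
    have hjj' : j'.succ = j.castSucc := by
      apply Fin.ext
      simp [Fin.val_succ, Fin.coe_castSucc, hj']
      omega
    obtain ⟨γ1, hγ1, hγ1far⟩ := IH i j' (by simp [hj']; omega) sp hsp
      (dist (xs j'.castSucc) (xs j'.succ)) ⟨dist_nonneg, le_rfl⟩
    have hB : fs j' (dist (xs j'.castSucc) (xs j'.succ)) = xs j.castSucc := by
      rw [(hfs j').2.1, hjj']
    rw [hB] at hγ1 hγ1far
    obtain ⟨γ2, hγ2, hγ2sub⟩ := geod_subseg (hfs j) ⟨le_rfl, dist_nonneg⟩ hsq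
    have hA : fs j 0 = xs j.castSucc := (hfs j).1
    rw [hA] at hγ2 hγ2sub
    obtain ⟨γ, hγ⟩ := hgeo (fs i sp) (fs j sq)
    refine ⟨γ, hγ, ?_⟩
    intro x hx
    obtain ⟨y, hy, hxy⟩ := hhyp (fs i sp) (xs j.castSucc) (fs j sq) γ1 γ2 γ hγ1 hγ2 hγ x hx
    rcases hy with hy | hy
    · obtain ⟨s, hsσ, hys⟩ := hγ1far y hy
      refine ⟨s, hsσ, ?_⟩
      have := dist_triangle x y s
      push_cast
      linarith
    · refine ⟨y, ?_, ?_⟩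
      · rw [hσ]
        exact Set.mem_iUnion.2 ⟨j, hγ2sub hy⟩
      · have hm : (0 : ℝ) ≤ (m : ℝ) * δ := by positivity
        push_cast
        linarith

/-- Lemma 2.19: projection of a far-away concatenation of `n`
geodesic segments onto a geodesic has diameter less than `8δ`. -/
theorem proj_of_far_concatenation_small {X : Type u} [MetricSpace X] (δ : ℝ)
    (hδ : 0 < δ) (hgeo : GeodesicSpace X) (hhyp : DeltaHyperbolic X δ)
    (u v : X) (h : ℝ → X) (hh : IsGeodesicFrom h u v)
    (n : ℕ) (xs : Fin (n + 1) → X) (fs : Fin n → ℝ → X)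
    (hfs : ∀ i : Fin n, IsGeodesicFrom (fs i) (xs i.castSucc) (xs i.succ))
    (σ : Set X) (hσ : σ = ⋃ i : Fin n, geodImage (fs i) (xs i.castSucc) (xs i.succ))
    (hfar : ∀ p ∈ σ, ((n : ℝ) + 1) * δ < Metric.infDist p (geodImage h u v)) :
    ∀ p ∈ projSetOf (geodImage h u v) σ, ∀ q ∈ projSetOf (geodImage h u v) σ,
      dist p q < 8 * δ := by
  intro p' hp' q' hq'
  rw [projSetOf, Set.mem_iUnion₂] at hp' hq'
  obtain ⟨p, hpσ, hp'⟩ := hp'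
  obtain ⟨q, hqσ, hq'⟩ := hq'
  -- locate p and q on pieces
  have hploc : ∃ (i : Fin n) (sp : ℝ),
      sp ∈ Set.Icc (0 : ℝ) (dist (xs i.castSucc) (xs i.succ)) ∧ fs i sp = p := by
    rw [hσ, Set.mem_iUnion] at hpσ
    obtain ⟨i, sp, hsp, hfp⟩ := hpσ
    exact ⟨i, sp, hsp, hfp⟩
  have hqloc : ∃ (j : Fin n) (sq : ℝ),
      sq ∈ Set.Icc (0 : ℝ) (dist (xs j.castSucc) (xs j.succ)) ∧ fs j sq = q := by
    rw [hσ, Set.mem_iUnion] at hqσ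
    obtain ⟨j, sq, hsq, hfq⟩ := hqσ
    exact ⟨j, sq, hsq, hfq⟩
  obtain ⟨i, sp, hsp, hfp⟩ := hploc
  obtain ⟨j, sq, hsq, hfq⟩ := hqloc
  -- a geodesic between pieces stays > 2δ from η
  have key : ∀ (i j : Fin n) (sp sq : ℝ),
      sp ∈ Set.Icc (0 : ℝ) (dist (xs i.castSucc) (xs i.succ)) →
      sq ∈ Set.Icc (0 : ℝ) (dist (xs j.castSucc) (xs j.succ)) →
      (i : ℕ) ≤ (j : ℕ) →
      ∃ γ : ℝ → X, IsGeodesicFrom γ (fs i sp) (fs j sq) ∧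
        ∀ x ∈ geodImage γ (fs i sp) (fs j sq),
          2 * δ < Metric.infDist x (geodImage h u v) := by
    intro i j sp sq hsp hsq hij
    obtain ⟨γ, hγ, hnear⟩ := chain_near hδ hgeo hhyp xs fs hfs σ hσ
      ((j : ℕ) - (i : ℕ)) i j (by omega) sp hsp sq hsq
    refine ⟨γ, hγ, ?_⟩
    intro x hx
    obtain ⟨s, hsσ, hxs⟩ := hnear x hx
    have h1 := hfar s hsσ
    have h2 : Metric.infDist s (geodImage h u v) ≤
        Metric.infDist x (geodImage h u v) + dist s x :=
      Metric.infDist_le_infDist_add_dist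
    have h3 : dist s x = dist x s := dist_comm _ _
    have hnat : (j : ℕ) - (i : ℕ) + 1 ≤ n := by omega
    have hcast : (((j : ℕ) - (i : ℕ) : ℕ) : ℝ) + 1 ≤ (n : ℝ) := by exact_mod_cast hnat
    have hmδ : (((j : ℕ) - (i : ℕ) : ℕ) : ℝ) * δ ≤ ((n : ℝ) - 1) * δ :=
      mul_le_mul_of_nonneg_right (by linarith) hδ.le
    nlinarith
  rcases le_total (i : ℕ) (j : ℕ) with hij | hij
  · obtain ⟨γ, hγ, hfarγ⟩ := key i j sp sq hsp hsq hij
    rw [hfp, hfq] at hγ hfarγ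
    have := quad_proj hδ hgeo hhyp hh hγ hfarγ hp' hq'
    linarith
  · obtain ⟨γ, hγ, hfarγ⟩ := key j i sq sp hsq hsp hij
    rw [hfp, hfq] at hγ hfarγ
    have := quad_proj hδ hgeo hhyp hh hγ hfarγ hq' hp'
    rw [dist_comm] at this
    linarith
end

section
/- Let Γ be a δ-hyperbolic connected graph and let 𝓗 be a factor system for Γ. Then for each θ > 0 there exists T_θ (depending on θ, δ and the factor-system constants) such that: if x, y ∈ Γ and d_Γ(x,y) ≥ T_θ, then there exists V ∈ 𝓗 ∪ {Γ} with d_{V̂}(π_V(x), π_V(y)) ≥ θ (uniqueness axiom). -/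
universe u

open SimpleGraph

/-- The cone-off `Ŵ` of (the subgraph induced on) `W` with respect to the family
`𝓗_W = {U ∈ 𝓗 | U ⊊ W}`, realized as a graph on the ambient vertex set (vertices
outside `W` are isolated). -/
def hatG {V : Type u} (G : SimpleGraph V) (𝓗 : Set (Set V)) (W : Set V) : SimpleGraph V where
  Adj a b := a ∈ W ∧ b ∈ W ∧
    (G.Adj a b ∨ (a ≠ b ∧ ∃ U ∈ 𝓗, U ⊂ W ∧ a ∈ U ∧ b ∈ U))
  symm := by
    constructor
    intro a b hab
    obtain ⟨ha, hb, h | ⟨hne, U, hU, hUW, haU, hbU⟩⟩ := hab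
    · exact ⟨hb, ha, Or.inl h.symm⟩
    · exact ⟨hb, ha, Or.inr ⟨hne.symm, U, hU, hUW, hbU, haU⟩⟩
  loopless := by
    constructor
    intro a ha
    obtain ⟨-, -, h | ⟨hne, -⟩⟩ := ha
    · exact G.irrefl h
    · exact hne rfl

/-- Closest-point projection (in the graph metric of `G`) of the vertex `x` to `W`. -/
def gProjSet {V : Type u} (G : SimpleGraph V) (W : Set V) (x : V) : Set V :=
  {w ∈ W | ∀ w' ∈ W, G.dist x w ≤ G.dist x w'}

/-- Closest-point projection (in the graph metric of `G`) of the set `S` to `W`. -/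
def gProjSetOf {V : Type u} (G : SimpleGraph V) (W S : Set V) : Set V :=
  ⋃ s ∈ S, gProjSet G W s

/-- The Hausdorff distance between `S` and `T` in the graph metric of `G` is at most `d`. -/
def GHausBound {V : Type u} (G : SimpleGraph V) (d : ℝ) (S T : Set V) : Prop :=
  (∀ s ∈ S, ∃ t ∈ T, (G.dist s t : ℝ) ≤ d) ∧
  (∀ t ∈ T, ∃ s ∈ S, (G.dist t s : ℝ) ≤ d)

/-- A factor system `𝓗` for the graph `G`, with constants `K, c, ξ, B`
(Definition 3.1). -/
structure FactorSystem {V : Type u} (G : SimpleGraph V) (𝓗 : Set (Set V))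
    (K : ℝ) (c : ℕ) (ξ B : ℝ) : Prop where
  connected : ∀ W ∈ 𝓗, (G.induce W).Connected
  qie : ∀ (W : Set V), W ∈ 𝓗 → ∀ (u v : V) (hu : u ∈ W) (hv : v ∈ W),
    ((G.induce W).dist ⟨u, hu⟩ ⟨v, hv⟩ : ℝ) ≤ K * (G.dist u v : ℝ) + K
  proj : ∀ W₁ ∈ 𝓗, ∀ W₂ ∈ 𝓗,
    (∀ p ∈ gProjSetOf G W₁ W₂, ∀ q ∈ gProjSetOf G W₁ W₂, (G.dist p q : ℝ) ≤ ξ) ∨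
    ∃ U ∈ 𝓗, U ⊆ W₁ ∧ GHausBound G B (gProjSetOf G W₁ W₂) U
  deep : ∀ W₁ ∈ 𝓗, ∀ W₂ ∈ 𝓗,
    GHausBound G B (gProjSetOf G W₁ W₂) W₁ → W₁ ⊆ W₂
  chains : ∀ (n : ℕ) (f : Fin (n + 1) → Set V), (∀ i, f i ∈ 𝓗) →
    (∀ i : Fin n, f i.castSucc ⊂ f i.succ) → n + 1 ≤ c
  rigid : ∀ W₁ ∈ 𝓗, ∀ W₂ ∈ 𝓗, (∃ d : ℝ, GHausBound G d W₁ W₂) → W₁ = W₂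

/-! Suppose that no `V ∈ 𝓗 ∪ {Γ}` separates the projections of `x` and `y` by `θ`. By induction
on the height of `W` in `𝓗`, we bound the length of any segment of a geodesic `[x, y]` whose
endpoints are close to `W`. The projections `u`, `v` of `x`, `y` to `W` are joined by a
`Ŵ`-geodesic with fewer than `θ` steps, each of which is an edge of `Γ` or crosses a proper
subfactor `U ⊊ W`. Since factors are quasi-isometrically embedded, the Morse lemma and slim
polygons keep the middle of the segment uniformly close to these steps. By pigeonhole a long
subsegment then has both endpoints close to the same step, which cannot be an edge, so it is a
subfactor of smaller height. Chains in `𝓗` have at most `c` elements, so for `W = Γ` this bounds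
`d(x, y)`. -/

namespace SimpleGraph

variable {V : Type*} {G : SimpleGraph V}

lemma Connected.cast_dist_triangle (hconn : G.Connected) {u v w : V} :
    (G.dist u w : ℝ) ≤ G.dist u v + G.dist v w := by
  exact_mod_cast hconn.dist_triangle

namespace Walk

variable {u v a b : V}

lemma dist_getVert_getVert_of_length_eq_dist {p : G.Walk u v} (hp : p.length = G.dist u v)
    {i j : ℕ} (hij : i ≤ j) (hj : j ≤ p.length) :
    G.dist (p.getVert i) (p.getVert j) = j - i := by
  have h := length_eq_dist_of_subwalk hp
    ((isSubwalk_take (p.drop i) (j - i)).trans (isSubwalk_drop p i))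
  rw [take_length, drop_length, drop_getVert, Nat.add_sub_cancel' hij] at h
  omega

lemma dist_start_getVert_of_length_eq_dist {p : G.Walk u v} (hp : p.length = G.dist u v)
    {m : ℕ} (hm : m ≤ p.length) : G.dist u (p.getVert m) = m := by
  simpa using dist_getVert_getVert_of_length_eq_dist hp (Nat.zero_le m) hm

lemma dist_getVert_end_of_length_eq_dist {p : G.Walk u v} (hp : p.length = G.dist u v)
    {m : ℕ} (hm : m ≤ p.length) : G.dist (p.getVert m) v = p.length - m := by
  simpa using dist_getVert_getVert_of_length_eq_dist hp hm le_rfl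

lemma dist_start_le_length_of_mem_support {p : G.Walk u v} {z : V} (hz : z ∈ p.support) :
    G.dist u z ≤ p.length := by
  classical exact (dist_le _).trans (p.length_takeUntil_le_length hz)

lemma dist_le_length_of_mem_support {p : G.Walk u v} {z : V} (hz : z ∈ p.support) :
    G.dist z v ≤ p.length := by
  classical exact (dist_le _).trans (p.length_dropUntil_le_length hz)

lemma exists_walk_getVert_getVert (p : G.Walk u v) {i j : ℕ} (hij : i ≤ j) (hj : j ≤ p.length) :
    ∃ q : G.Walk (p.getVert i) (p.getVert j), q.length = j - i ∧ q.support ⊆ p.support := by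
  refine ⟨((p.drop i).take (j - i)).copy rfl (by simp [Nat.add_sub_cancel' hij]), ?_, ?_⟩
  · simp only [length_copy, take_length, drop_length]
    omega
  · rw [support_copy]
    exact ((isSubwalk_take _ _).trans (isSubwalk_drop p i)).support_subset

def IsQuasiGeodesic (K : ℝ) (P : G.Walk a b) : Prop :=
  ∀ i j : ℕ, i ≤ j → j ≤ P.length →
    ((j - i : ℕ) : ℝ) ≤ K * G.dist (P.getVert i) (P.getVert j) + K

lemma IsQuasiGeodesic.exists_walk_getVert_getVert {K : ℝ} {P : G.Walk a b}
    (hP : P.IsQuasiGeodesic K) {i j : ℕ} (hi : i ≤ P.length) (hj : j ≤ P.length) :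
    ∃ q : G.Walk (P.getVert i) (P.getVert j),
      (q.length : ℝ) ≤ K * G.dist (P.getVert i) (P.getVert j) + K ∧ q.support ⊆ P.support := by
  rcases le_total i j with hij | hji
  · obtain ⟨q, hq, hsub⟩ := P.exists_walk_getVert_getVert hij hj
    exact ⟨q, hq ▸ hP i j hij hj, hsub⟩
  · obtain ⟨q, hq, hsub⟩ := P.exists_walk_getVert_getVert hji hi
    refine ⟨q.reverse, ?_, by simpa using hsub⟩
    rw [length_reverse, hq, dist_comm]
    exact hP j i hji hi

noncomputable def distToSupport (P : G.Walk a b) (z : V) : ℕ :=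
  sInf {n | ∃ w ∈ P.support, G.dist z w = n}

lemma distToSupport_le (P : G.Walk a b) {z w : V} (hw : w ∈ P.support) :
    P.distToSupport z ≤ G.dist z w :=
  Nat.sInf_le ⟨w, hw, rfl⟩

lemma exists_dist_eq_distToSupport (P : G.Walk a b) (z : V) :
    ∃ w ∈ P.support, G.dist z w = P.distToSupport z :=
  Nat.sInf_mem (s := {n | ∃ w ∈ P.support, G.dist z w = n}) ⟨_, a, P.start_mem_support, rfl⟩

lemma distToSupport_eq_zero (P : G.Walk a b) {z : V} (hz : z ∈ P.support) :
    P.distToSupport z = 0 :=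
  Nat.le_zero.mp (by simpa using P.distToSupport_le (z := z) hz)

/-- The first and third inequalities make a detour from `zlo` to `P`, along `P`, and back to `zhi`
avoid the open ball of radius `P.distToSupport z₀` around `z₀`. -/
lemma exists_margin_points {P r : G.Walk a b} (hr : r.length = G.dist a b) {z₀ : V}
    (hz₀ : z₀ ∈ r.support) (hmax : ∀ z ∈ r.support, P.distToSupport z ≤ P.distToSupport z₀) :
    ∃ zlo zhi : V,
      P.distToSupport z₀ + P.distToSupport zlo ≤ G.dist zlo z₀ ∧
      G.dist zlo z₀ ≤ 2 * P.distToSupport z₀ ∧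
      P.distToSupport z₀ + P.distToSupport zhi ≤ G.dist z₀ zhi ∧
      G.dist z₀ zhi ≤ 2 * P.distToSupport z₀ ∧
      G.dist zlo z₀ + G.dist z₀ zhi = G.dist zlo zhi := by
  obtain ⟨m, rfl, hm⟩ := mem_support_iff_exists_getVert.mp hz₀
  set D := P.distToSupport (r.getVert m)
  have hDa : D ≤ m := by
    have := P.distToSupport_le (z := r.getVert m) P.start_mem_support
    rwa [dist_comm, dist_start_getVert_of_length_eq_dist hr hm] at this
  have hDb : D ≤ r.length - m := by
    have := P.distToSupport_le (z := r.getVert m) P.end_mem_support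
    rwa [dist_getVert_end_of_length_eq_dist hr hm] at this
  set mlo := m - 2 * D
  set mhi := min (m + 2 * D) r.length
  have hlo : D + P.distToSupport (r.getVert mlo) ≤ m - mlo := by
    by_cases h : 2 * D ≤ m
    · have := hmax _ (r.getVert_mem_support mlo)
      omega
    · have : mlo = 0 := by omega
      rw [this, getVert_zero, P.distToSupport_eq_zero P.start_mem_support]
      omega
  have hhi : D + P.distToSupport (r.getVert mhi) ≤ mhi - m := by
    by_cases h : m + 2 * D ≤ r.length
    · have := hmax _ (r.getVert_mem_support mhi)
      omega
    · have : mhi = r.length := by omega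
      rw [this, getVert_length, P.distToSupport_eq_zero P.end_mem_support]
      omega
  refine ⟨r.getVert mlo, r.getVert mhi, ?_⟩
  rw [dist_getVert_getVert_of_length_eq_dist hr (by omega) hm,
    dist_getVert_getVert_of_length_eq_dist hr (by omega) (by omega),
    dist_getVert_getVert_of_length_eq_dist hr (by omega) (by omega)]
  omega

end Walk

end SimpleGraph

lemma succ_sq_add_two_le_two_pow (t : ℕ) : (t + 1) ^ 2 + 2 ≤ 2 ^ (t + 2) := by
  induction t with
  | zero => norm_num
  | succ t ih => rw [pow_succ 2]; nlinarith

noncomputable def morseConst (δ K : ℝ) : ℝ := δ * (8 * ((6 * K + 2) * δ + K) + 1)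

lemma morseConst_nonneg {δ K : ℝ} (hδ : 0 ≤ δ) (hK : 0 ≤ K) : 0 ≤ morseConst δ K := by
  unfold morseConst; positivity

/-- With `t = ⌈log₂ L⌉`, `(t + 1)² < 2 ^ (t + 2) ≤ 8 L ≤ 8 ((6 K + 2) δ (t + 1) + K)`, whence
`t + 1 ≤ 8 ((6 K + 2) δ + K)`. -/
lemma le_morseConst {δ K : ℝ} (hδ : 0 ≤ δ) (hK : 0 ≤ K) {D L : ℕ}
    (hD : (D : ℝ) ≤ δ * (Nat.clog 2 L + 1)) (hL : (L : ℝ) ≤ (6 * K + 2) * D + K) :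
    (D : ℝ) ≤ morseConst δ K := by
  set t := Nat.clog 2 L
  have hs : (t : ℝ) + 1 ≤ 8 * ((6 * K + 2) * δ + K) + 1 := by
    rcases le_or_gt L 1 with hL1 | hL1
    · have ht : t = 0 := Nat.clog_of_right_le_one hL1 2
      have : 0 ≤ (6 * K + 2) * δ + K := by positivity
      rw [ht]; push_cast; linarith
    · have hpow : (2 : ℝ) ^ (t - 1) < L := by
        exact_mod_cast Nat.pow_pred_clog_lt_self one_lt_two hL1
      have hsq : ((t : ℝ) + 1) ^ 2 + 2 ≤ 2 ^ (t + 2) := by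
        exact_mod_cast succ_sq_add_two_le_two_pow t
      have ht : t - 1 + 3 = t + 2 := by have := Nat.clog_pos one_lt_two hL1; omega
      have h8 : (2 : ℝ) ^ (t + 2) = 8 * 2 ^ (t - 1) := by rw [← ht, pow_add]; ring
      have hlin : ((t : ℝ) + 1) ^ 2 < 8 * ((6 * K + 2) * δ * (t + 1) + K) := by
        nlinarith
      nlinarith
  unfold morseConst
  nlinarith

namespace GraphHyperbolic

open SimpleGraph Walk

variable {V : Type*} {G : SimpleGraph V} {δ K : ℝ} {a b : V}

theorem exists_close_of_walk (hδ : 0 ≤ δ) (hconn : G.Connected) (hhyp : GraphHyperbolic G δ)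
    (P : G.Walk a b) {r : G.Walk a b} (hr : r.length = G.dist a b) {z : V}
    (hz : z ∈ r.support) :
    ∃ w ∈ P.support, (G.dist z w : ℝ) ≤ δ * (Nat.clog 2 P.length + 1) := by
  induction hn : P.length using Nat.strong_induction_on generalizing a b P r z with
  | _ n IH =>
  rcases le_or_gt n 1 with hn1 | hn1
  · -- `r` has length at most one, so `z` is one of the endpoints shared with `P`
    have hrl : r.length ≤ 1 := by have := dist_le P; omega
    obtain ⟨k, rfl, hk⟩ := mem_support_iff_exists_getVert.mp hz
    replace hk : k ≤ 1 := hk.trans hrl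
    refine ⟨r.getVert k, ?_, by simp; positivity⟩
    interval_cases k
    · simp
    · simp [r.getVert_of_length_le hrl]
  · set m := (n + 1) / 2
    obtain ⟨g₁, hg₁⟩ := hconn.exists_walk_length_eq_dist a (P.getVert m)
    obtain ⟨g₂, hg₂⟩ := hconn.exists_walk_length_eq_dist (P.getVert m) b
    obtain ⟨w', hw', hzw'⟩ := hhyp _ _ _ g₁ g₂ r hg₁ hg₂ hr z hz
    have hclog : Nat.clog 2 m + 1 = Nat.clog 2 n := by
      rw [Nat.clog_of_two_le (by norm_num) hn1, show (n + 2 - 1) / 2 = m by omega]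
    obtain ⟨w, hw, hw'w⟩ : ∃ w ∈ P.support, (G.dist w' w : ℝ) ≤ δ * (Nat.clog 2 m + 1) := by
      rcases hw' with hw' | hw'
      · obtain ⟨w, hw, h⟩ := IH m (by omega) (P.take m) hg₁ hw' (by simp; omega)
        exact ⟨w, (isSubwalk_take P m).support_subset hw, h⟩
      · obtain ⟨w, hw, h⟩ := IH (n - m) (by omega) (P.drop m) hg₂ hw' (by rw [drop_length, hn])
        refine ⟨w, (isSubwalk_drop P m).support_subset hw, h.trans ?_⟩
        gcongr
        omega
    refine ⟨w, hw, ?_⟩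
    calc (G.dist z w : ℝ) ≤ G.dist z w' + G.dist w' w := hconn.cast_dist_triangle
      _ ≤ δ + δ * (Nat.clog 2 m + 1) := add_le_add hzw' hw'w
      _ = δ * (Nat.clog 2 n + 1) := by rw [← hclog]; push_cast; ring

theorem exists_close_of_chain (hδ : 0 ≤ δ) (hconn : G.Connected) (hhyp : GraphHyperbolic G δ)
    (cs : ℕ → V) (S : ℕ → Set V) {k : ℕ} (hk : 1 ≤ k)
    (hS : ∀ i < k, ∃ p : G.Walk (cs i) (cs (i + 1)),
      p.length = G.dist (cs i) (cs (i + 1)) ∧ ∀ z ∈ p.support, z ∈ S i)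
    {r : G.Walk (cs 0) (cs k)} (hr : r.length = G.dist (cs 0) (cs k)) {z : V}
    (hz : z ∈ r.support) :
    ∃ i < k, ∃ w ∈ S i, (G.dist z w : ℝ) ≤ δ * k := by
  induction k generalizing cs S z with
  | zero => omega
  | succ k IH =>
  obtain ⟨p₀, hp₀, hp₀S⟩ := hS 0 (by omega)
  obtain ⟨g, hg⟩ := hconn.exists_walk_length_eq_dist (cs 1) (cs (k + 1))
  obtain ⟨w', hw', hzw'⟩ := hhyp _ _ _ p₀ g r hp₀ hg hr z hz
  have hδk : 0 ≤ δ * k := by positivity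
  rcases hw' with hw' | hw'
  · exact ⟨0, by omega, w', hp₀S w' hw', by push_cast; linarith⟩
  rcases Nat.eq_zero_or_pos k with rfl | hk
  · have hw'1 : w' = cs 1 := by
      have := dist_start_le_length_of_mem_support hw'
      rw [hg, dist_self, Nat.le_zero, hconn.dist_eq_zero_iff] at this
      exact this.symm
    exact ⟨0, by omega, w', hp₀S w' (hw'1 ▸ p₀.end_mem_support), by simpa using hzw'⟩
  obtain ⟨i, hi, w, hw, hw'w⟩ := IH (fun j => cs (j + 1)) (fun j => S (j + 1)) hk
    (fun i hi => hS (i + 1) (by omega)) hg hw'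
  refine ⟨i + 1, by omega, w, hw, ?_⟩
  calc (G.dist z w : ℝ) ≤ G.dist z w' + G.dist w' w := hconn.cast_dist_triangle
    _ ≤ δ * ↑(k + 1) := by push_cast; linarith

theorem exists_close_of_quadrilateral (hδ : 0 ≤ δ) (hconn : G.Connected)
    (hhyp : GraphHyperbolic G δ) {x u v y : V} {p : G.Walk x u} {q : G.Walk u v}
    {s : G.Walk v y} {r : G.Walk x y} (hp : p.length = G.dist x u)
    (hq : q.length = G.dist u v) (hs : s.length = G.dist v y) (hr : r.length = G.dist x y)
    {z : V} (hz : z ∈ r.support) :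
    ∃ w, (w ∈ p.support ∨ w ∈ q.support ∨ w ∈ s.support) ∧ (G.dist z w : ℝ) ≤ 2 * δ := by
  obtain ⟨g, hg⟩ := hconn.exists_walk_length_eq_dist u y
  obtain ⟨w', hw' | hw', hzw'⟩ := hhyp _ _ _ p g r hp hg hr z hz
  · exact ⟨w', Or.inl hw', by linarith⟩
  obtain ⟨w, hw, hw'w⟩ := hhyp _ _ _ q s g hq hs hg w' hw'
  refine ⟨w, Or.inr hw, ?_⟩
  calc (G.dist z w : ℝ) ≤ G.dist z w' + G.dist w' w := hconn.cast_dist_triangle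
    _ ≤ 2 * δ := by linarith

theorem exists_close_of_far_from_ends (hδ : 0 ≤ δ) (hconn : G.Connected)
    (hhyp : GraphHyperbolic G δ) {x u v y : V} {r : G.Walk x y} (hr : r.length = G.dist x y)
    {q : G.Walk u v} (hq : q.length = G.dist u v) {m : ℕ} (hm : m ≤ r.length)
    (hxu : (G.dist x u : ℝ) + 2 * δ < m) (hvy : (m : ℝ) + G.dist v y + 2 * δ < r.length) :
    ∃ w ∈ q.support, (G.dist (r.getVert m) w : ℝ) ≤ 2 * δ := by
  obtain ⟨p, hp⟩ := hconn.exists_walk_length_eq_dist x u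
  obtain ⟨s, hs⟩ := hconn.exists_walk_length_eq_dist v y
  obtain ⟨w, hw | hw | hw, hzw⟩ :=
    hhyp.exists_close_of_quadrilateral hδ hconn hp hq hs hr (r.getVert_mem_support m)
  · have hxw : (G.dist x w : ℝ) ≤ G.dist x u := by
      exact_mod_cast hp ▸ dist_start_le_length_of_mem_support hw
    have := hconn.cast_dist_triangle (u := x) (v := w) (w := r.getVert m)
    rw [dist_start_getVert_of_length_eq_dist hr hm, SimpleGraph.dist_comm (u := w)] at this
    linarith
  · exact ⟨w, hw, hzw⟩
  · have hwy : (G.dist w y : ℝ) ≤ G.dist v y := by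
      exact_mod_cast hs ▸ dist_le_length_of_mem_support hw
    have := hconn.cast_dist_triangle (u := r.getVert m) (v := w) (w := y)
    rw [dist_getVert_end_of_length_eq_dist hr hm, Nat.cast_sub hm] at this
    linarith

/-- The core of the Morse lemma: if `z₀` is a point of the geodesic `r` farthest from `P`, at
distance `D`, then a detour through `P` avoiding the open `D`-ball around `z₀` has length `L`
linear in `D`, while slimness of triangles forces `D ≤ δ log L`. -/
theorem exists_detour (hδ : 0 ≤ δ) (hK : 0 ≤ K) (hconn : G.Connected)
    (hhyp : GraphHyperbolic G δ) {P : G.Walk a b} (hP : P.IsQuasiGeodesic K)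
    {r : G.Walk a b} (hr : r.length = G.dist a b) {z₀ : V} (hz₀ : z₀ ∈ r.support)
    (hmax : ∀ z ∈ r.support, P.distToSupport z ≤ P.distToSupport z₀) :
    ∃ L : ℕ, (P.distToSupport z₀ : ℝ) ≤ δ * (Nat.clog 2 L + 1) ∧
      (L : ℝ) ≤ (6 * K + 2) * P.distToSupport z₀ + K := by
  set D := P.distToSupport z₀
  obtain ⟨zlo, zhi, hlo, hlo2, hhi, hhi2, hsum⟩ := exists_margin_points hr hz₀ hmax
  obtain ⟨plo, hploP, hplo⟩ := P.exists_dist_eq_distToSupport zlo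
  obtain ⟨phi, hphiP, hphi⟩ := P.exists_dist_eq_distToSupport zhi
  obtain ⟨klo, rfl, hklo⟩ := mem_support_iff_exists_getVert.mp hploP
  obtain ⟨khi, rfl, hkhi⟩ := mem_support_iff_exists_getVert.mp hphiP
  obtain ⟨mid, hmid, hmidP⟩ := hP.exists_walk_getVert_getVert hklo hkhi
  obtain ⟨glo, hglo⟩ := hconn.exists_walk_length_eq_dist zlo (P.getVert klo)
  obtain ⟨ghi, hghi⟩ := hconn.exists_walk_length_eq_dist (P.getVert khi) zhi
  obtain ⟨g₁, hg₁⟩ := hconn.exists_walk_length_eq_dist zlo z₀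
  obtain ⟨g₂, hg₂⟩ := hconn.exists_walk_length_eq_dist z₀ zhi
  set π := glo.append (mid.append ghi)
  obtain ⟨w, hw, hz₀w⟩ := hhyp.exists_close_of_walk hδ hconn π (r := g₁.append g₂)
    (by rw [length_append, hg₁, hg₂, hsum]) (z := z₀) (by simp)
  have := SimpleGraph.dist_comm (G := G) (u := zlo) (v := P.getVert klo)
  have := SimpleGraph.dist_comm (G := G) (u := zhi) (v := P.getVert khi)
  have hfar : D ≤ G.dist z₀ w := by
    simp only [π, mem_support_append_iff] at hw
    rcases hw with hw | hw | hw
    · have := dist_start_le_length_of_mem_support hw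
      have := hconn.dist_triangle (u := zlo) (v := w) (w := z₀)
      have := SimpleGraph.dist_comm (G := G) (u := w) (v := z₀)
      omega
    · exact P.distToSupport_le (hmidP hw)
    · have := dist_le_length_of_mem_support hw
      have := hconn.dist_triangle (u := z₀) (v := w) (w := zhi)
      omega
  refine ⟨π.length, le_trans (by exact_mod_cast hfar) hz₀w, ?_⟩
  have hplophi : G.dist (P.getVert klo) (P.getVert khi) ≤ 6 * D := by
    have := hconn.dist_triangle (u := P.getVert klo) (v := zlo) (w := P.getVert khi)
    have := hconn.dist_triangle (u := zlo) (v := zhi) (w := P.getVert khi)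
    omega
  have hglo' : glo.length ≤ D := by omega
  have hghi' : ghi.length ≤ D := by omega
  have hmid' : (mid.length : ℝ) ≤ K * (6 * D) + K := by
    refine hmid.trans ?_
    gcongr
    exact_mod_cast hplophi
  simp only [π, length_append, Nat.cast_add]
  have : (glo.length : ℝ) ≤ D := by exact_mod_cast hglo'
  have : (ghi.length : ℝ) ≤ D := by exact_mod_cast hghi'
  linarith

theorem exists_close_of_isQuasiGeodesic (hδ : 0 ≤ δ) (hK : 0 ≤ K) (hconn : G.Connected)
    (hhyp : GraphHyperbolic G δ) {P : G.Walk a b} (hP : P.IsQuasiGeodesic K)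
    {r : G.Walk a b} (hr : r.length = G.dist a b) {z : V} (hz : z ∈ r.support) :
    ∃ w ∈ P.support, (G.dist z w : ℝ) ≤ morseConst δ K := by
  classical
  obtain ⟨z₀, hz₀, hmax⟩ := r.support.toFinset.exists_max_image P.distToSupport ⟨a, by simp⟩
  simp only [List.mem_toFinset] at hz₀ hmax
  obtain ⟨w, hw, hzw⟩ := P.exists_dist_eq_distToSupport z
  obtain ⟨L, hDL, hL⟩ := exists_detour hδ hK hconn hhyp hP hr hz₀ hmax
  refine ⟨w, hw, ?_⟩
  calc (G.dist z w : ℝ) ≤ P.distToSupport z₀ := by rw [hzw]; exact_mod_cast hmax z hz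
    _ ≤ morseConst δ K := le_morseConst hδ hK hDL hL

end GraphHyperbolic

lemma exists_lt_le_of_forall_le_exists_lt {L : ℕ} {P : ℕ → ℕ → Prop}
    (h : ∀ k ≤ L, ∃ i < L, P k i) : ∃ k k' i, k < k' ∧ k' ≤ L ∧ i < L ∧ P k i ∧ P k' i := by
  choose! f hf hP using h
  obtain ⟨k, hk, k', hk', hne, heq⟩ := Finset.exists_ne_map_eq_of_card_lt_of_maps_to
    (s := Finset.range (L + 1)) (t := Finset.range L) (by simp) (f := f)
    (fun k hk => by simpa using hf k (by simpa [Nat.lt_succ_iff] using hk))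
  simp only [Finset.mem_range, Nat.lt_succ_iff] at hk hk'
  rcases hne.lt_or_gt with hlt | hlt
  · exact ⟨k, k', f k, hlt, hk', hf k hk, hP k hk, heq ▸ hP k' hk'⟩
  · exact ⟨k', k, f k, hlt, hk, hf k hk, heq ▸ hP k' hk', hP k hk⟩

lemma exists_arith_progression_mem_Ioo {a b τ θ : ℝ} {L : ℕ} (ha : 0 ≤ a) (hτ : 0 ≤ τ)
    (hL : (L : ℝ) ≤ θ) (hab : a + θ * (τ + 1) + 1 < b) :
    ∃ lo : ℕ, ∀ k ≤ L, a < ↑(lo + k * ⌈τ⌉₊) ∧ (↑(lo + k * ⌈τ⌉₊) : ℝ) < b := by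
  refine ⟨⌊a⌋₊ + 1, fun k hk => ?_⟩
  have h₁ := Nat.lt_floor_add_one a
  have h₂ := Nat.floor_le ha
  have h₃ : (k : ℝ) * ⌈τ⌉₊ ≤ θ * (τ + 1) :=
    mul_le_mul ((Nat.cast_le.mpr hk).trans hL) (Nat.ceil_lt_add_one hτ).le (by positivity)
      ((Nat.cast_nonneg L).trans hL)
  push_cast
  constructor <;> nlinarith

section FactorSystem

open SimpleGraph Walk

variable {V : Type*} {G : SimpleGraph V} {𝓗 : Set (Set V)} {δ K : ℝ} {c : ℕ} {ξ B : ℝ}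

theorem FactorSystem.exists_isQuasiGeodesic (hFS : FactorSystem G 𝓗 K c ξ B) {U : Set V}
    (hU : U ∈ 𝓗) {a b : V} (ha : a ∈ U) (hb : b ∈ U) :
    ∃ P : G.Walk a b, P.IsQuasiGeodesic (max K 0) ∧ ∀ z ∈ P.support, z ∈ U := by
  obtain ⟨p, hp⟩ := (hFS.connected U hU).exists_walk_length_eq_dist ⟨a, ha⟩ ⟨b, hb⟩
  refine ⟨p.map (Embedding.induce U).toHom, fun i j hij hj => ?_, fun z hz => ?_⟩
  · replace hj : j ≤ p.length := hj.trans_eq (Walk.length_map _ _)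
    have hqie := hFS.qie U hU _ _ (p.getVert i).2 (p.getVert j).2
    erw [getVert_map, getVert_map]
    rw [← dist_getVert_getVert_of_length_eq_dist hp hij hj]
    calc ((G.induce U).dist (p.getVert i) (p.getVert j) : ℝ)
        ≤ K * G.dist (p.getVert i : V) (p.getVert j) + K := hqie
      _ ≤ max K 0 * G.dist (p.getVert i : V) (p.getVert j) + max K 0 := by
        gcongr <;> exact le_max_left K 0
  · obtain ⟨z', -, rfl⟩ := List.mem_map.mp ((Walk.support_map _ p) ▸ hz)
    exact z'.2

theorem FactorSystem.connected_induce (hconn : G.Connected) (hFS : FactorSystem G 𝓗 K c ξ B)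
    {W : Set V} (hW : W ∈ 𝓗 ∨ W = Set.univ) : (G.induce W).Connected := by
  rcases hW with hW | rfl
  · exact hFS.connected W hW
  · exact (induceUnivIso G).connected_iff.mpr hconn

theorem reachable_hatG {W : Set V} (hW : (G.induce W).Connected) {u v : V} (hu : u ∈ W)
    (hv : v ∈ W) : (hatG G 𝓗 W).Reachable u v := by
  let f : G.induce W →g hatG G 𝓗 W :=
    { toFun := Subtype.val, map_rel' := fun {a b} h => ⟨a.2, b.2, Or.inl h⟩ }
  exact (hW ⟨u, hu⟩ ⟨v, hv⟩).map f

def IsAnchor (G : SimpleGraph V) (𝓗 : Set (Set V)) (W A : Set V) : Prop :=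
  (A ∈ 𝓗 ∧ A ⊂ W) ∨ ∀ p ∈ A, ∀ q ∈ A, G.dist p q ≤ 1

theorem exists_anchor_of_adj_hatG (hδ : 0 ≤ δ) (hconn : G.Connected)
    (hhyp : GraphHyperbolic G δ) (hFS : FactorSystem G 𝓗 K c ξ B) {W : Set V} {a b : V}
    (hab : (hatG G 𝓗 W).Adj a b) :
    ∃ A, IsAnchor G 𝓗 W A ∧ ∃ g : G.Walk a b, g.length = G.dist a b ∧
      ∀ z ∈ g.support, ∃ w ∈ A, (G.dist z w : ℝ) ≤ morseConst δ (max K 0) := by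
  rcases hab.2.2 with hadj | ⟨-, U, hU, hUW, haU, hbU⟩
  · have hab1 : G.dist a b = 1 := dist_eq_one_iff_adj.mpr hadj
    have hba : G.dist b a = 1 := dist_eq_one_iff_adj.mpr hadj.symm
    refine ⟨{a, b}, Or.inr ?_, hadj.toWalk, hab1.symm, fun z hz => ⟨z, by simpa using hz, ?_⟩⟩
    · rintro p (rfl | rfl) q (rfl | rfl) <;> simp [hab1, hba]
    · simpa using morseConst_nonneg hδ (le_max_right K 0)
  · obtain ⟨P, hP, hPU⟩ := hFS.exists_isQuasiGeodesic hU haU hbU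
    obtain ⟨g, hg⟩ := hconn.exists_walk_length_eq_dist a b
    refine ⟨U, Or.inl ⟨hU, hUW⟩, g, hg, fun z hz => ?_⟩
    obtain ⟨w, hw, hzw⟩ :=
      hhyp.exists_close_of_isQuasiGeodesic hδ (le_max_right K 0) hconn hP hg hz
    exact ⟨w, hPU w hw, hzw⟩

/-- De-electrification: each step of `γ` is replaced by a `G`-geodesic, which stays close to the
anchor of the step by the Morse lemma, and `r` is compared with the resulting path by slim
polygons. -/
theorem exists_anchor_cover (hδ : 0 ≤ δ) (hconn : G.Connected) (hhyp : GraphHyperbolic G δ)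
    (hFS : FactorSystem G 𝓗 K c ξ B) {W : Set V} {u v : V} (γ : (hatG G 𝓗 W).Walk u v)
    (hγ : 1 ≤ γ.length) :
    ∃ A : ℕ → Set V, (∀ i < γ.length, IsAnchor G 𝓗 W (A i)) ∧
      ∀ {r : G.Walk u v}, r.length = G.dist u v → ∀ z ∈ r.support,
        ∃ i < γ.length, ∃ w ∈ A i,
          (G.dist z w : ℝ) ≤ δ * γ.length + morseConst δ (max K 0) := by
  have hstep := fun i (hi : i < γ.length) =>
    exists_anchor_of_adj_hatG hδ hconn hhyp hFS (γ.adj_getVert_succ hi)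
  choose! A hA hpiece using hstep
  refine ⟨A, hA, fun {r} hr z hz => ?_⟩
  obtain ⟨i, hi, w', ⟨w, hw, hw'w⟩, hzw'⟩ := hhyp.exists_close_of_chain hδ hconn γ.getVert
    (fun i => {z | ∃ w ∈ A i, (G.dist z w : ℝ) ≤ morseConst δ (max K 0)}) hγ hpiece
    (r := r.copy γ.getVert_zero.symm γ.getVert_length.symm) (by simpa using hr)
    (by simpa using hz)
  refine ⟨i, hi, w, hw, ?_⟩
  calc (G.dist z w : ℝ) ≤ G.dist z w' + G.dist w' w := hconn.cast_dist_triangle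
    _ ≤ δ * γ.length + morseConst δ (max K 0) := add_le_add hzw' hw'w

end FactorSystem

section Height

variable {V : Type*} {𝓗 : Set (Set V)}

def HeightLE (𝓗 : Set (Set V)) (n : ℕ) (W : Set V) : Prop :=
  ∀ p : LTSeries 𝓗, (p.last : Set V) ⊂ W → p.length < n

lemma HeightLE.not_ssubset_of_zero {W : Set V} (h : HeightLE 𝓗 0 W) {U : Set V} (hU : U ∈ 𝓗) :
    ¬ U ⊂ W :=
  fun hUW => Nat.not_lt_zero _ (h (RelSeries.singleton _ ⟨U, hU⟩) hUW)

lemma HeightLE.of_ssubset {W : Set V} {n : ℕ} (h : HeightLE 𝓗 (n + 1) W) {U : Set V}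
    (hU : U ∈ 𝓗) (hUW : U ⊂ W) : HeightLE 𝓗 n U := fun p hp => by
  simpa using h (p.snoc ⟨U, hU⟩ hp) (by simpa using hUW)

lemma FactorSystem.heightLE_univ {G : SimpleGraph V} {K : ℝ} {c : ℕ} {ξ B : ℝ}
    (hFS : FactorSystem G 𝓗 K c ξ B) : HeightLE 𝓗 c Set.univ := fun p _ =>
  hFS.chains p.length (fun i => p i) (fun i => (p i).2) (fun i => p.step i)

end Height

section UniquenessAxiom

open SimpleGraph Walk

variable {V : Type*} {G : SimpleGraph V} {𝓗 : Set (Set V)} {δ K : ℝ} {c : ℕ} {ξ B θ : ℝ}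

def ProjectionsFar (G : SimpleGraph V) (𝓗 : Set (Set V)) (θ : ℝ) (W : Set V) (x y : V) :
    Prop :=
  ∀ u ∈ gProjSet G W x, ∀ v ∈ gProjSet G W y, θ ≤ ((hatG G 𝓗 W).dist u v : ℝ)

def AnchoredSegment (G : SimpleGraph V) (E : ℝ) {x y : V} (r : G.Walk x y) (W : Set V)
    (i j : ℕ) : Prop :=
  i ≤ j ∧ j ≤ r.length ∧ (∃ a ∈ W, (G.dist (r.getVert i) a : ℝ) ≤ E) ∧
    ∃ b ∈ W, (G.dist (r.getVert j) b : ℝ) ≤ E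

/-- `2 δ` from the quadrilateral `x u v y`, and `δ θ + morseConst` from de-electrifying a
`Ŵ`-geodesic with fewer than `θ` steps. -/
noncomputable def anchorConst (δ K θ : ℝ) : ℝ := 2 * δ + δ * θ + morseConst δ (max K 0)

noncomputable def stepThreshold (δ K θ τ : ℝ) : ℝ :=
  θ * (τ + 1) + 2 * anchorConst δ K θ + 4 * δ + 2

noncomputable def threshold (δ K θ : ℝ) : ℕ → ℝ
  | 0 => stepThreshold δ K θ (2 * anchorConst δ K θ + 2)
  | n + 1 => stepThreshold δ K θ (threshold δ K θ n)

lemma anchorConst_nonneg (hδ : 0 ≤ δ) (hθ : 0 < θ) : 0 ≤ anchorConst δ K θ := by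
  have := morseConst_nonneg hδ (le_max_right K 0)
  unfold anchorConst; positivity

lemma le_stepThreshold (hδ : 0 ≤ δ) (hθ : 0 < θ) {τ : ℝ} (hτ : 0 ≤ τ) :
    2 * anchorConst δ K θ + 2 ≤ stepThreshold δ K θ τ := by
  unfold stepThreshold; nlinarith

lemma le_threshold (hδ : 0 ≤ δ) (hθ : 0 < θ) (n : ℕ) :
    2 * anchorConst δ K θ + 2 ≤ threshold δ K θ n := by
  have := anchorConst_nonneg (K := K) hδ hθ
  induction n with
  | zero => exact le_stepThreshold hδ hθ (by linarith)
  | succ n ih => exact le_stepThreshold hδ hθ (by linarith)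

theorem exists_short_hatWalk_of_not_projectionsFar {W : Set V} (hW : (G.induce W).Connected)
    {x y : V} (h : ¬ ProjectionsFar G 𝓗 θ W x y) :
    ∃ u ∈ gProjSet G W x, ∃ v ∈ gProjSet G W y, ∃ γ : (hatG G 𝓗 W).Walk u v,
      (γ.length : ℝ) < θ := by
  simp only [ProjectionsFar, not_forall, not_le, exists_prop] at h
  obtain ⟨u, hu, v, hv, huv⟩ := h
  obtain ⟨γ, hγ⟩ := (reachable_hatG hW hu.1 hv.1).exists_walk_length_eq_dist
  exact ⟨u, hu, v, hv, γ, hγ ▸ huv⟩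

theorem AnchoredSegment.dist_gProjSet_le {E : ℝ} (hconn : G.Connected) {x y : V}
    {r : G.Walk x y} (hr : r.length = G.dist x y) {W : Set V} {i j : ℕ}
    (hseg : AnchoredSegment G E r W i j) {u v : V} (hu : u ∈ gProjSet G W x)
    (hv : v ∈ gProjSet G W y) :
    (G.dist x u : ℝ) ≤ i + E ∧ (G.dist v y : ℝ) ≤ r.length - j + E := by
  obtain ⟨hij, hj, ⟨a, ha, hia⟩, ⟨b, hb, hjb⟩⟩ := hseg
  constructor
  · calc (G.dist x u : ℝ) ≤ G.dist x a := by exact_mod_cast hu.2 a ha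
      _ ≤ G.dist x (r.getVert i) + G.dist (r.getVert i) a := hconn.cast_dist_triangle
      _ ≤ i + E := by rw [dist_start_getVert_of_length_eq_dist hr (hij.trans hj)]; linarith
  · calc (G.dist v y : ℝ) = G.dist y v := by rw [SimpleGraph.dist_comm]
      _ ≤ G.dist y b := by exact_mod_cast hv.2 b hb
      _ ≤ G.dist y (r.getVert j) + G.dist (r.getVert j) b := hconn.cast_dist_triangle
      _ ≤ r.length - j + E := by
        rw [SimpleGraph.dist_comm, dist_getVert_end_of_length_eq_dist hr hj, Nat.cast_sub hj]
        linarith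

theorem AnchoredSegment.exists_anchors_near_middle (hδ : 0 ≤ δ) (hθ : 0 < θ)
    (hconn : G.Connected) (hhyp : GraphHyperbolic G δ) (hFS : FactorSystem G 𝓗 K c ξ B)
    {x y : V} {r : G.Walk x y} (hr : r.length = G.dist x y) {W : Set V}
    (hW : W ∈ 𝓗 ∨ W = Set.univ) (hWfar : ¬ ProjectionsFar G 𝓗 θ W x y) {i j : ℕ}
    (hseg : AnchoredSegment G (anchorConst δ K θ) r W i j)
    (hlen : 2 * anchorConst δ K θ < (j : ℝ) - i) :
    ∃ L : ℕ, (L : ℝ) < θ ∧ ∃ A : ℕ → Set V, (∀ i' < L, IsAnchor G 𝓗 W (A i')) ∧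
      ∀ m : ℕ, (i : ℝ) + anchorConst δ K θ + 2 * δ < m →
        (m : ℝ) < j - anchorConst δ K θ - 2 * δ →
        ∃ i' < L, ∃ w ∈ A i', (G.dist (r.getVert m) w : ℝ) ≤ anchorConst δ K θ := by
  set E := anchorConst δ K θ
  obtain ⟨u, hu, v, hv, γ, hγθ⟩ :=
    exists_short_hatWalk_of_not_projectionsFar (hFS.connected_induce hconn hW) hWfar
  obtain ⟨hxu, hvy⟩ := hseg.dist_gProjSet_le hconn hr hu hv
  have hj : (j : ℝ) ≤ r.length := by exact_mod_cast hseg.2.1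
  have hγ : 1 ≤ γ.length := by
    by_contra! h0
    obtain rfl : u = v := γ.eq_of_length_eq_zero (by omega)
    have := hconn.cast_dist_triangle (u := x) (v := u) (w := y)
    rw [← hr] at this
    linarith
  obtain ⟨A, hA, hcover⟩ := exists_anchor_cover hδ hconn hhyp hFS γ hγ
  obtain ⟨r₁, hr₁⟩ := hconn.exists_walk_length_eq_dist u v
  refine ⟨γ.length, hγθ, A, hA, fun m hlo hhi => ?_⟩
  have hE : 0 ≤ E := anchorConst_nonneg hδ hθ
  have hm : m ≤ r.length := by exact_mod_cast (by linarith : (m : ℝ) ≤ r.length)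
  obtain ⟨w₁, hw₁, hzw₁⟩ := hhyp.exists_close_of_far_from_ends hδ hconn hr hr₁ hm
    (by linarith) (by linarith)
  obtain ⟨i', hi', w, hw, hw₁w⟩ := hcover hr₁ w₁ hw₁
  refine ⟨i', hi', w, hw, ?_⟩
  have : δ * γ.length ≤ δ * θ := mul_le_mul_of_nonneg_left hγθ.le hδ
  calc _ ≤ _ := hconn.cast_dist_triangle
    _ ≤ E := by simp only [E, anchorConst]; linarith

/-- Positions of the middle of the segment spaced `⌈τ⌉` apart are close to anchors; by pigeonhole
two of them share an anchor, which can neither have diameter at most one nor, by `hrec`, be a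
proper subfactor of `W`. -/
theorem AnchoredSegment.sub_lt_stepThreshold (hδ : 0 ≤ δ) (hθ : 0 < θ) (hconn : G.Connected)
    (hhyp : GraphHyperbolic G δ) (hFS : FactorSystem G 𝓗 K c ξ B) {x y : V}
    {r : G.Walk x y} (hr : r.length = G.dist x y) {W : Set V} (hW : W ∈ 𝓗 ∨ W = Set.univ)
    (hWfar : ¬ ProjectionsFar G 𝓗 θ W x y) {τ : ℝ} (hτ : 2 * anchorConst δ K θ + 2 ≤ τ)
    (hrec : ∀ U ∈ 𝓗, U ⊂ W → ∀ i j, AnchoredSegment G (anchorConst δ K θ) r U i j →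
      (j : ℝ) - i < τ)
    {i j : ℕ} (hseg : AnchoredSegment G (anchorConst δ K θ) r W i j) :
    (j : ℝ) - i < stepThreshold δ K θ τ := by
  set E := anchorConst δ K θ
  have hE : 0 ≤ E := anchorConst_nonneg hδ hθ
  by_contra! hlong
  unfold stepThreshold at hlong
  obtain ⟨L, hLθ, A, hA, hnear⟩ :=
    hseg.exists_anchors_near_middle hδ hθ hconn hhyp hFS hr hW hWfar (by nlinarith)
  obtain ⟨lo, hpos⟩ := exists_arith_progression_mem_Ioo (a := i + E + 2 * δ)
    (b := j - E - 2 * δ) (by positivity) (by linarith) hLθ.le (by linarith)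
  obtain ⟨k, k', i', hkk', hk'L, hi', ⟨w, hw, hzw⟩, ⟨w', hw', hzw'⟩⟩ :=
    exists_lt_le_of_forall_le_exists_lt fun k hk => hnear _ (hpos k hk).1 (hpos k hk).2
  set s := ⌈τ⌉₊
  have hkk's : lo + k * s + s ≤ lo + k' * s := by nlinarith
  have hgap : τ ≤ ((lo + k' * s : ℕ) : ℝ) - ↑(lo + k * s) := by
    have : ((lo + k * s + s : ℕ) : ℝ) ≤ ↑(lo + k' * s) := by exact_mod_cast hkk's
    push_cast at this ⊢
    linarith [Nat.le_ceil τ]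
  have hm' : lo + k' * s ≤ r.length := by
    have := (hpos k' hk'L).2
    have : (j : ℝ) ≤ r.length := by exact_mod_cast hseg.2.1
    exact_mod_cast (by linarith : ((lo + k' * s : ℕ) : ℝ) ≤ r.length)
  rcases hA i' hi' with ⟨hU, hUW⟩ | hdiam
  · have := hrec _ hU hUW _ _ ⟨by omega, hm', ⟨w, hw, hzw⟩, ⟨w', hw', hzw'⟩⟩
    linarith
  · have hd := dist_getVert_getVert_of_length_eq_dist hr (i := lo + k * s) (j := lo + k' * s)
      (by omega) hm'
    have h₁ := hconn.cast_dist_triangle (u := r.getVert (lo + k * s)) (v := w)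
      (w := r.getVert (lo + k' * s))
    have h₂ := hconn.cast_dist_triangle (u := w) (v := w') (w := r.getVert (lo + k' * s))
    have h₃ : (G.dist w w' : ℝ) ≤ 1 := by exact_mod_cast hdiam w hw w' hw'
    rw [hd, Nat.cast_sub (by omega), SimpleGraph.dist_comm (u := w')] at *
    linarith

theorem AnchoredSegment.sub_lt_threshold (hδ : 0 ≤ δ) (hθ : 0 < θ) (hconn : G.Connected)
    (hhyp : GraphHyperbolic G δ) (hFS : FactorSystem G 𝓗 K c ξ B) {x y : V}
    {r : G.Walk x y} (hr : r.length = G.dist x y)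
    (hnone : ∀ W, W ∈ 𝓗 ∨ W = Set.univ → ¬ ProjectionsFar G 𝓗 θ W x y) {n : ℕ} {W : Set V}
    (hW : W ∈ 𝓗 ∨ W = Set.univ) (hheight : HeightLE 𝓗 n W) {i j : ℕ}
    (hseg : AnchoredSegment G (anchorConst δ K θ) r W i j) :
    (j : ℝ) - i < threshold δ K θ n := by
  induction n generalizing W i j with
  | zero =>
    exact hseg.sub_lt_stepThreshold hδ hθ hconn hhyp hFS hr hW (hnone W hW) le_rfl
      fun U hU hUW => absurd hUW (hheight.not_ssubset_of_zero hU)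
  | succ n ih =>
    exact hseg.sub_lt_stepThreshold hδ hθ hconn hhyp hFS hr hW (hnone W hW)
      (le_threshold hδ hθ n) fun U hU hUW _ _ => ih (Or.inl hU) (hheight.of_ssubset hU hUW)

end UniquenessAxiom

/-- Proposition 3.15, uniqueness axiom: far-apart points of `Γ` are
far apart in some coned-off space `V̂`, `V ∈ 𝓗 ∪ {Γ}`. -/
theorem uniqueness_axiom : ∀ (δ K : ℝ) (c : ℕ) (ξ B : ℝ) (θ : ℝ),
    0 < δ → 0 < θ → ∃ T : ℝ,
    ∀ (V : Type u) (G : SimpleGraph V) (𝓗 : Set (Set V)),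
      G.Connected → GraphHyperbolic G δ → FactorSystem G 𝓗 K c ξ B →
      ∀ x y : V, T ≤ (G.dist x y : ℝ) →
        ∃ W : Set V, (W ∈ 𝓗 ∨ W = Set.univ) ∧
          ∀ u ∈ gProjSet G W x, ∀ v ∈ gProjSet G W y,
            θ ≤ ((hatG G 𝓗 W).dist u v : ℝ) := by
  intro δ K c ξ B θ hδ hθ
  refine ⟨threshold δ K θ c, fun V G 𝓗 hconn hhyp hFS x y hxy => ?_⟩
  by_contra hnone
  obtain ⟨r, hr⟩ := hconn.exists_walk_length_eq_dist x y
  have hE := anchorConst_nonneg (K := K) hδ.le hθ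
  have hseg : AnchoredSegment G (anchorConst δ K θ) r Set.univ 0 r.length :=
    ⟨Nat.zero_le _, le_rfl, ⟨x, trivial, by simpa using hE⟩, ⟨y, trivial, by simpa using hE⟩⟩
  have := hseg.sub_lt_threshold hδ.le hθ hconn hhyp hFS hr
    (fun W hW hfar => hnone ⟨W, hW, hfar⟩) (Or.inr rfl) hFS.heightLE_univ
  rw [hr] at this
  push_cast at this
  linarith
end

section
/- Let X be a geodesic δ-hyperbolic metric space and let 𝓕 be a geodesic weak factor system for X, with all elements K-quasiconvex and with constant D' as in condition (3'). Then there exists ζ = ζ(δ, K, D') (one may take ζ = 2δ + D' + K) such that for all V, W ∈ 𝓕: if V is coarsely contained in W (i.e. V ⊆ N_R(W) for some R), then V ⊆ N_ζ(W). -/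
universe u v

/-- `V` is coarsely contained in `W`. -/
def CoarselyContained {X : Type u} [MetricSpace X] (V W : Set X) : Prop :=
  ∃ R : ℝ, 0 ≤ R ∧ V ⊆ Metric.cthickening R W

/-- `V` is properly coarsely contained in `W`. -/
def ProperCoarselyContained {X : Type u} [MetricSpace X] (V W : Set X) : Prop :=
  CoarselyContained V W ∧ ¬ CoarselyContained W V

/-- A weak factor system on `X` with constants `K, c, ξ', B', D', qc`. -/
structure WeakFactorSystem {X : Type u} [MetricSpace X] (𝓕 : Set (Set X))
    (K : ℝ) (c : ℕ) (ξ' B' D' qc : ℝ) : Prop where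
  quasiconvex : ∀ F ∈ 𝓕, QuasiconvexSet K F
  chains : ∀ (n : ℕ) (f : Fin (n + 1) → Set X), (∀ i, f i ∈ 𝓕) →
    (∀ i : Fin n, ProperCoarselyContained (f i.succ) (f i.castSucc)) → n + 1 ≤ c
  proj : ∀ V ∈ 𝓕, ∀ W ∈ 𝓕,
    (∀ p ∈ projSetOf V W, ∀ q ∈ projSetOf V W, dist p q < ξ') ∨
    ∃ U ∈ 𝓕, HausBound B' U (projSetOf V W)
  deep : ∀ V ∈ 𝓕, ∀ v ∈ V, ∀ θ : ℝ, 0 < θ →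
    ∃ a ∈ V, ∃ b ∈ V, ∃ f : ℝ → X, ∃ L : ℝ, 0 ≤ L ∧ f 0 = a ∧ f L = b ∧
      (∀ s ∈ Set.Icc (0 : ℝ) L, ∀ t ∈ Set.Icc (0 : ℝ) L,
        (1 / qc) * |s - t| - qc ≤ dist (f s) (f t) ∧
          dist (f s) (f t) ≤ qc * |s - t| + qc) ∧
      Metric.infDist v (f '' Set.Icc (0 : ℝ) L) ≤ D' ∧ θ ≤ dist v a ∧ θ ≤ dist v b

/-- Condition (3') of a geodesic weak factor system: through each point of each
`V ∈ 𝓕` there pass arbitrarily long geodesic segments with endpoints on `V`. -/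
def GeodCondition3' {X : Type u} [MetricSpace X] (𝓕 : Set (Set X)) (D' : ℝ) : Prop :=
  ∀ V ∈ 𝓕, ∀ v ∈ V, ∀ θ : ℝ, 0 < θ →
    ∃ a ∈ V, ∃ b ∈ V, ∃ f : ℝ → X, IsGeodesicFrom f a b ∧
      Metric.infDist v (geodImage f a b) ≤ D' ∧ θ ≤ dist v a ∧ θ ≤ dist v b

lemma geod_dist_left {X : Type u} [MetricSpace X] {f : ℝ → X} {a b x : X}
    (h : IsGeodesicFrom f a b) (hx : x ∈ geodImage f a b) : dist x a ≤ dist a b := by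
  obtain ⟨s, hs, rfl⟩ := hx
  have h0 : (0 : ℝ) ∈ Set.Icc (0 : ℝ) (dist a b) := ⟨le_refl 0, dist_nonneg⟩
  have hd := h.2.2 s hs 0 h0
  rw [h.1] at hd
  rw [hd, sub_zero, abs_of_nonneg hs.1]
  exact hs.2

lemma geod_dist_right {X : Type u} [MetricSpace X] {f : ℝ → X} {a b x : X}
    (h : IsGeodesicFrom f a b) (hx : x ∈ geodImage f a b) : dist x b ≤ dist a b := by
  obtain ⟨s, hs, rfl⟩ := hx
  have hD : dist a b ∈ Set.Icc (0 : ℝ) (dist a b) := ⟨dist_nonneg, le_refl _⟩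
  have hd := h.2.2 s hs (dist a b) hD
  rw [h.2.1] at hd
  rw [hd, abs_of_nonpos (by linarith [hs.2])]
  have := hs.1; linarith

lemma mem_cth_of_infDist_le {X : Type u} [MetricSpace X] {s : Set X} (hs : s.Nonempty)
    {x : X} {ζ : ℝ} (hζ : 0 ≤ ζ) (h : Metric.infDist x s ≤ ζ) :
    x ∈ Metric.cthickening ζ s := by
  rw [Metric.mem_cthickening_iff]
  simp only [Metric.infDist] at h
  exact (ENNReal.le_ofReal_iff_toReal_le (Metric.infEdist_ne_top hs) hζ).mpr h

lemma exists_close_of_mem_cth {X : Type u} [MetricSpace X] {s : Set X}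
    {x : X} {R : ℝ} (hR : 0 ≤ R) (hx : x ∈ Metric.cthickening R s) :
    ∃ w ∈ s, dist x w < R + 1 := by
  rw [Metric.mem_cthickening_iff] at hx
  have hlt : EMetric.infEdist x s < ENNReal.ofReal (R + 1) :=
    lt_of_le_of_lt hx ((ENNReal.ofReal_lt_ofReal_iff (by linarith)).mpr (by linarith))
  rcases EMetric.infEdist_lt_iff.mp hlt with ⟨w, hw, hwl⟩
  exact ⟨w, hw, edist_lt_ofReal.mp hwl⟩

/-- Lemma 4.4: coarse inclusions between elements of a geodesic
weak factor system are `ζ`-inclusions, with `ζ = ζ(δ, K, D')`. -/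
theorem coarse_inclusion_uniform : ∀ δ K D' : ℝ, 0 < δ → 0 ≤ K → 0 ≤ D' →
    ∃ ζ : ℝ, ∀ (c : ℕ) (ξ' B' qc : ℝ),
    ∀ (X : Type u) [MetricSpace X], GeodesicSpace X → DeltaHyperbolic X δ →
      ∀ 𝓕 : Set (Set X), WeakFactorSystem 𝓕 K c ξ' B' D' qc →
        GeodCondition3' 𝓕 D' →
        ∀ V ∈ 𝓕, ∀ W ∈ 𝓕, CoarselyContained V W → V ⊆ Metric.cthickening ζ W := by
  intro δ K D' hδ hK hD'
  refine ⟨2 * δ + D' + K + 1, ?_⟩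
  intro c ξ' B' qc X _ hgeo hhyp 𝓕 hWFS h3' V hV W hW hcc v hv
  obtain ⟨R, hR0, hVW⟩ := hcc
  -- W is nonempty
  have hvW : v ∈ Metric.cthickening R W := hVW hv
  have hWne : W.Nonempty := by
    rcases W.eq_empty_or_nonempty with rfl | h
    · rw [Metric.cthickening_empty] at hvW; exact absurd hvW (Set.notMem_empty v)
    · exact h
  -- pick a long geodesic through (near) v with endpoints on V
  set θ : ℝ := 2 * δ + R + D' + 4 with hθdef
  have hθpos : 0 < θ := by positivity
  obtain ⟨a, haV, b, hbV, f, hf, hinfv, hva, hvb⟩ := h3' V hV v hv θ hθpos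
  -- a point x on the geodesic close to v
  have himg_ne : (geodImage f a b).Nonempty := ⟨a, 0, ⟨le_refl 0, dist_nonneg⟩, hf.1⟩
  obtain ⟨x, hx, hvx⟩ :=
    (Metric.infDist_lt_iff himg_ne).mp (lt_of_le_of_lt hinfv (by linarith : D' < D' + 1))
  -- projections of the endpoints to W
  obtain ⟨a', ha'W, haa'⟩ := exists_close_of_mem_cth hR0 (hVW haV)
  obtain ⟨b', hb'W, hbb'⟩ := exists_close_of_mem_cth hR0 (hVW hbV)
  -- geodesics for the two triangles
  obtain ⟨f1, hf1⟩ := hgeo a b'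
  obtain ⟨g1, hg1⟩ := hgeo b' b
  obtain ⟨f2, hf2⟩ := hgeo a a'
  obtain ⟨g2, hg2⟩ := hgeo a' b'
  -- first triangle (a, b', b)
  obtain ⟨y, hy, hxy⟩ := hhyp a b' b f1 g1 f hf1 hg1 hf x hx
  rcases hy with hy | hy
  · -- y on [a, b']; second triangle (a, a', b')
    obtain ⟨z, hz, hyz⟩ := hhyp a a' b' f2 g2 f1 hf2 hg2 hf1 y hy
    rcases hz with hz | hz
    · -- z on [a, a'] : contradiction, x would be too close to a
      exfalso
      have hza : dist z a ≤ dist a a' := geod_dist_left hf2 hz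
      have h1 : dist v a ≤ dist v x + dist x y + dist y z + dist z a := by
        have := dist_triangle4 v x y z
        have := dist_triangle v z a
        have := dist_triangle4 v x y a
        calc dist v a ≤ dist v z + dist z a := dist_triangle v z a
          _ ≤ (dist v x + dist x y + dist y z) + dist z a := by
              linarith [dist_triangle4 v x y z]
      have : dist v a < θ := by
        have := dist_comm a a' ▸ haa'
        simp only [hθdef]
        linarith [haa']
      linarith
    · -- z on [a', b'] : the good case
      have hzK : Metric.infDist z W ≤ K := hWFS.quasiconvex W hW a' ha'W b' hb'W g2 hg2 z hz
      have hfin : Metric.infDist v W ≤ 2 * δ + D' + K + 1 := by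
        have h1 : Metric.infDist v W ≤ Metric.infDist z W + dist v z :=
          Metric.infDist_le_infDist_add_dist
        have h2 : dist v z ≤ dist v x + dist x y + dist y z := dist_triangle4 v x y z
        linarith
      exact mem_cth_of_infDist_le hWne (by linarith) hfin
  · -- y on [b', b] : contradiction, x would be too close to b
    exfalso
    have hyb : dist y b ≤ dist b' b := geod_dist_right hg1 hy
    have hbb'2 : dist b' b < R + 1 := by rw [dist_comm]; exact hbb'
    have : dist v b < θ := by
      have h1 : dist v b ≤ dist v x + dist x y + dist y b := dist_triangle4 v x y b
      simp only [hθdef]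
      linarith
    linarith
end

section
/- Let G be a hyperbolic group with a fixed finite generating set whose Cayley graph is δ-hyperbolic, and let H, J be infinite quasiconvex subgroups of G. Then for all a, b ∈ G: if the coset aH is coarsely contained in the coset bJ (i.e. aH ⊆ N_R(bJ) for some R ≥ 0), then the intersection aHa^{-1} ∩ bJb^{-1} is infinite. -/
/-!
If every point of `aH` is within `R` of `bJ`, then `aH ⊆ bJ · B` where `B` is the finite ball
of radius `⌈R⌉` about `1` in the Cayley graph. By pigeonhole, infinitely many `x ∈ aH` lie in a
single translate `bJf`. For two such elements `x, y`, the quotient `xy⁻¹` lies in `aHa⁻¹` and in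
`(bJf)(bJf)⁻¹ = bJb⁻¹`; fixing `y`, the map `x ↦ xy⁻¹` is injective.
-/

universe u

open SimpleGraph Pointwise

/-- The Cayley graph of a group `G` with respect to a generating set `S`
(made symmetric). -/
def cayley (G : Type u) [Group G] (S : Set G) : SimpleGraph G where
  Adj x y := x ≠ y ∧ (x⁻¹ * y ∈ S ∨ y⁻¹ * x ∈ S)
  symm := ⟨fun _ _ h => ⟨h.1.symm, h.2.symm⟩⟩
  loopless := ⟨fun _ h => h.1 rfl⟩

/-- `Y` is a `K`-quasiconvex subset of the graph `Γ`: every geodesic walk with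
endpoints in `Y` stays in the closed `K`-neighborhood of `Y`. -/
def GraphQuasiconvex {V : Type u} (Γ : SimpleGraph V) (K : ℝ) (Y : Set V) : Prop :=
  ∀ a ∈ Y, ∀ b ∈ Y, ∀ p : Γ.Walk a b, p.length = Γ.dist a b →
    ∀ z ∈ p.support, ∃ w ∈ Y, (Γ.dist z w : ℝ) ≤ K

theorem Set.Finite.pow {M : Type*} [Monoid M] {T : Set M} (hT : T.Finite) (n : ℕ) :
    (T ^ n).Finite := by
  induction n with
  | zero => exact Set.finite_one
  | succ n ih => exact pow_succ T n ▸ ih.mul hT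

theorem Set.Infinite.exists_infinite_inter_of_subset_biUnion {α ι : Type*} {s : Set α}
    {F : Set ι} {t : ι → Set α} (hs : s.Infinite) (hF : F.Finite)
    (hst : s ⊆ ⋃ i ∈ F, t i) : ∃ i ∈ F, (s ∩ t i).Infinite := by
  by_contra! hfin
  refine hs ((hF.biUnion fun i hi => hfin i hi).subset fun x hx => ?_)
  obtain ⟨i, hi, hxi⟩ := Set.mem_iUnion₂.1 (hst hx)
  exact Set.mem_iUnion₂.2 ⟨i, hi, hx, hxi⟩

section Cosets
variable {G : Type*} [Group G]

theorem mul_inv_mem_image_conj_of_mem_smul {H : Subgroup G} {a u v : G}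
    (hu : u ∈ a • (H : Set G)) (hv : v ∈ a • (H : Set G)) :
    u * v⁻¹ ∈ (fun h => a * h * a⁻¹) '' (H : Set G) := by
  obtain ⟨h, hh, rfl⟩ := hu
  obtain ⟨k, hk, rfl⟩ := hv
  exact ⟨h * k⁻¹, mul_mem hh (inv_mem hk), by simp only [smul_eq_mul]; group⟩

theorem infinite_image_conj_inter_of_smul_subset_mul_finite {H J : Subgroup G} {a b : G}
    {F : Set G} (hH : (H : Set G).Infinite) (hF : F.Finite)
    (hHJ : a • (H : Set G) ⊆ b • (J : Set G) * F) :
    (((fun h => a * h * a⁻¹) '' (H : Set G)) ∩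
      ((fun j => b * j * b⁻¹) '' (J : Set G))).Infinite := by
  have hcover : a • (H : Set G) ⊆ ⋃ f ∈ F, (· * f⁻¹) ⁻¹' (b • (J : Set G)) := by
    intro x hx
    obtain ⟨y, hy, f, hf, rfl⟩ := hHJ hx
    exact Set.mem_iUnion₂.2 ⟨f, hf, by simpa using hy⟩
  obtain ⟨f, -, hinf⟩ :=
    (hH.image (MulAction.injective a).injOn).exists_infinite_inter_of_subset_biUnion hF hcover
  obtain ⟨x₀, hx₀⟩ := hinf.nonempty
  refine Set.infinite_of_injOn_mapsTo (mul_left_injective x₀⁻¹).injOn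
    (fun x hx => ⟨mul_inv_mem_image_conj_of_mem_smul hx.1 hx₀.1, ?_⟩) hinf
  simpa [mul_assoc] using mul_inv_mem_image_conj_of_mem_smul hx.2 hx₀.2

end Cosets

section CayleyGraph
variable {G : Type*} [Group G] {S : Set G}

theorem cayley_adj_mul_left (c : G) {x y : G} (h : (cayley G S).Adj x y) :
    (cayley G S).Adj (c * x) (c * y) := by
  obtain ⟨hne, hs⟩ := h
  exact ⟨by simpa using hne, by simpa [mul_assoc] using hs⟩

theorem cayley_reachable_mul_left (c : G) {x y : G} (h : (cayley G S).Reachable x y) :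
    (cayley G S).Reachable (c * x) (c * y) := by
  obtain ⟨p⟩ := h
  induction p with
  | nil => rfl
  | cons h _ ih => exact (cayley_adj_mul_left c h).reachable.trans ih

theorem cayley_preconnected (hS : Subgroup.closure S = ⊤) : (cayley G S).Preconnected := by
  suffices h : ∀ g, (cayley G S).Reachable 1 g from fun x y => (h x).symm.trans (h y)
  intro g
  have hg : g ∈ Subgroup.closure S := hS ▸ Subgroup.mem_top g
  induction hg using Subgroup.closure_induction with
  | mem s hs =>
    rcases eq_or_ne 1 s with rfl | hne
    · rfl
    · exact Adj.reachable ⟨hne, Or.inl (by simpa using hs)⟩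
  | one => rfl
  | mul x y _ _ hx hy => exact hx.trans (by simpa using cayley_reachable_mul_left x hy)
  | inv x _ hx => simpa using (cayley_reachable_mul_left x⁻¹ hx).symm

theorem inv_mul_mem_pow_length {x y : G} (p : (cayley G S).Walk x y) :
    x⁻¹ * y ∈ (S ∪ S⁻¹) ^ p.length := by
  induction p with
  | nil => simp
  | @cons x z y h _ ih =>
    have hxz : x⁻¹ * z ∈ S ∪ S⁻¹ := h.2.imp id fun h' => by simpa using h'
    rw [Walk.length_cons, pow_succ', show x⁻¹ * y = (x⁻¹ * z) * (z⁻¹ * y) by group]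
    exact Set.mul_mem_mul hxz ih

theorem inv_mul_mem_pow_of_dist_le (hS : Subgroup.closure S = ⊤) {x y : G} {n : ℕ}
    (h : (cayley G S).dist x y ≤ n) : x⁻¹ * y ∈ insert 1 (S ∪ S⁻¹) ^ n := by
  obtain ⟨p, hp⟩ := (cayley_preconnected hS x y).exists_walk_length_eq_dist
  exact Set.pow_subset_pow (Set.subset_insert _ _) (Set.mem_insert _ _) (hp ▸ h)
    (inv_mul_mem_pow_length p)

theorem subset_mul_pow_of_forall_exists_dist_le (hS : Subgroup.closure S = ⊤) {A B : Set G}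
    {R : ℝ} (hAB : ∀ u ∈ A, ∃ v ∈ B, ((cayley G S).dist u v : ℝ) ≤ R) :
    A ⊆ B * insert 1 (S ∪ S⁻¹) ^ ⌈R⌉₊ := by
  intro u hu
  obtain ⟨v, hv, hdist⟩ := hAB u hu
  have hle : (cayley G S).dist v u ≤ ⌈R⌉₊ := by
    rw [dist_comm]
    exact_mod_cast hdist.trans (Nat.le_ceil R)
  exact ⟨v, hv, v⁻¹ * u, inv_mul_mem_pow_of_dist_le hS hle, mul_inv_cancel_left v u⟩

end CayleyGraph

/-- Lemma 5.12: if the coset `aH` is coarsely contained in the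
coset `bJ`, then `aHa⁻¹ ∩ bJb⁻¹` is infinite. -/
theorem coarse_inclusion_infinite_intersection : ∀ δ K : ℝ, 0 < δ → 0 ≤ K →
    ∀ (G : Type u) [Group G] (S : Set G), S.Finite → Subgroup.closure S = ⊤ →
      GraphHyperbolic (cayley G S) δ →
      ∀ H J : Subgroup G,
        (H : Set G).Infinite → (J : Set G).Infinite →
        GraphQuasiconvex (cayley G S) K (H : Set G) →
        GraphQuasiconvex (cayley G S) K (J : Set G) →
        ∀ a b : G,
          (∃ R : ℝ, 0 ≤ R ∧ ∀ u ∈ a • (H : Set G), ∃ v ∈ b • (J : Set G),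
            ((cayley G S).dist u v : ℝ) ≤ R) →
          Set.Infinite (((fun h => a * h * a⁻¹) '' (H : Set G)) ∩
            ((fun j => b * j * b⁻¹) '' (J : Set G))) := by
  intro δ K _ _ G _ S hSfin hS _ H J hH _ _ _ a b ⟨R, _, hR⟩
  have hball : (insert 1 (S ∪ S⁻¹) ^ ⌈R⌉₊).Finite :=
    ((hSfin.union hSfin.inv).insert 1).pow _
  exact infinite_image_conj_inter_of_smul_subset_mul_finite hH hball
    (subset_mul_pow_of_forall_exists_dist_le hS hR)
end
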